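/- arXiv:2012.15789 — 6 statements merged into one kernel-verified Lean document; each statement's English description precedes it below -/
import Mathlib

section
/- Let φ ∈ ℝ[z₁,z₂], J ≥ 0, N' ≥ 2, r ≥ 2, and suppose that φ − z₁^J(z₂ − z₁^r)^{N'} is divisible by (z₂ − z₁^r)^{N'+1}. Then the Hessian determinant ω := ∂₁²φ·∂₂²φ − (∂₁∂₂φ)² satisfies ω = C z₁^{2J+r−2}(z₂ − z₁^r)^{2N'−3} + ρ, where C ≠ 0 is a real constant and ρ ∈ ℝ[z₁,z₂] is divisible by (z₂ − z₁^r)^{2N'−2}. -/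
open MvPolynomial

lemma pdc (i : Fin 2) (k : ℕ) : pderiv i ((k : MvPolynomial (Fin 2) ℝ)) = 0 := by
  rw [← map_natCast (C : ℝ →+* MvPolynomial (Fin 2) ℝ) k, pderiv_C]

lemma pdpow (i : Fin 2) (p : MvPolynomial (Fin 2) ℝ) (k m : ℕ) (h : m = k + 1) :
    pderiv i (p ^ m) = (m : MvPolynomial (Fin 2) ℝ) * p ^ k * pderiv i p := by
  subst h
  rw [Derivation.leibniz_pow]
  simp [nsmul_eq_mul, smul_eq_mul]
  ring

lemma pd0XJ (k : ℕ) : pderiv (0:Fin 2) ((X 0 : MvPolynomial (Fin 2) ℝ) ^ k) =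
    (k : MvPolynomial (Fin 2) ℝ) * X 0 ^ (k-1) := by
  rw [Derivation.leibniz_pow]
  simp [nsmul_eq_mul, smul_eq_mul]

lemma pd1XJ (k : ℕ) : pderiv (1:Fin 2) ((X 0 : MvPolynomial (Fin 2) ℝ) ^ k) = 0 := by
  rw [Derivation.leibniz_pow]
  simp [pderiv_X_of_ne]

/-- The Hessian determinant ω = ∂₁²φ·∂₂²φ − (∂₁∂₂φ)² of a two-variable polynomial. -/
noncomputable def hessDet (φ : MvPolynomial (Fin 2) ℝ) : MvPolynomial (Fin 2) ℝ :=
  pderiv 0 (pderiv 0 φ) * pderiv 1 (pderiv 1 φ) - (pderiv 0 (pderiv 1 φ)) ^ 2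

/-- If `φ − z₁^J (z₂ − z₁^r)^{N'}` is divisible by `(z₂ − z₁^r)^{N'+1}`
(with `N' ≥ 2`, `r ≥ 2`), then `ω = C·z₁^{2J+r−2}(z₂ − z₁^r)^{2N'−3} + ρ`
with `C ≠ 0` and `(z₂ − z₁^r)^{2N'−2} ∣ ρ`. -/
theorem stmt_2 (φ : MvPolynomial (Fin 2) ℝ) (J N' r : ℕ) (hN : 2 ≤ N') (hr : 2 ≤ r)
    (hdvd : (X 1 - X 0 ^ r : MvPolynomial (Fin 2) ℝ) ^ (N' + 1) ∣
      φ - X 0 ^ J * (X 1 - X 0 ^ r) ^ N') :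
    ∃ (c : ℝ) (ρ : MvPolynomial (Fin 2) ℝ), c ≠ 0 ∧
      hessDet φ = C c * X 0 ^ (2 * J + r - 2) * (X 1 - X 0 ^ r) ^ (2 * N' - 3) + ρ ∧
      (X 1 - X 0 ^ r : MvPolynomial (Fin 2) ℝ) ^ (2 * N' - 2) ∣ ρ := by
  obtain ⟨n, rfl⟩ : ∃ n, N' = n + 2 := ⟨N' - 2, by omega⟩
  obtain ⟨s, rfl⟩ : ∃ s, r = s + 2 := ⟨r - 2, by omega⟩
  simp only [show 2 * (n + 2) - 3 = 2 * n + 1 from by omega,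
    show 2 * (n + 2) - 2 = 2 * n + 2 from by omega,
    show 2 * J + (s + 2) - 2 = 2 * J + s from by omega]
  obtain ⟨q, hq⟩ := hdvd
  set g : MvPolynomial (Fin 2) ℝ := X 1 - X 0 ^ (s + 2) with hgdef
  have hφ : φ = X 0 ^ J * g ^ (n + 2) + g ^ (n + 3) * q := by
    rw [hgdef]; linear_combination hq
  have hg1 : pderiv 1 g = 1 := by
    rw [hgdef]; simp [pd1XJ]
  set gp : MvPolynomial (Fin 2) ℝ := ((s + 2 : ℕ) : MvPolynomial (Fin 2) ℝ) * X 0 ^ (s + 1) with hgpdef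
  set gpp : MvPolynomial (Fin 2) ℝ := (((s + 2) * (s + 1) : ℕ) : MvPolynomial (Fin 2) ℝ) * X 0 ^ s with hgppdef
  have hg0 : pderiv 0 g = -gp := by
    rw [hgdef, hgpdef]
    simp only [map_sub, pderiv_X_self, pd0XJ, Nat.add_sub_cancel, pderiv_X_of_ne (show (1:Fin 2) ≠ 0 by decide)]
    push_cast
    ring
  have hDgp : pderiv 0 gp = gpp := by
    rw [hgpdef, hgppdef]
    simp only [pderiv_mul, pdc, pd0XJ, Nat.add_sub_cancel]
    push_cast
    ring
  set A1 : MvPolynomial (Fin 2) ℝ := ((J : ℕ) : MvPolynomial (Fin 2) ℝ) * X 0 ^ (J - 1) with hA1def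
  have hA1 : pderiv 0 ((X 0 : MvPolynomial (Fin 2) ℝ) ^ J) = A1 := by
    rw [hA1def]; exact pd0XJ J
  set B : MvPolynomial (Fin 2) ℝ := ((n + 3 : ℕ) : MvPolynomial (Fin 2) ℝ) * q + g * pderiv 1 q with hB
  set E : MvPolynomial (Fin 2) ℝ := -(((n + 3 : ℕ) : MvPolynomial (Fin 2) ℝ) * gp * q) + g * pderiv 0 q with hE
  have h1 : pderiv 1 φ = ((n + 2 : ℕ) : MvPolynomial (Fin 2) ℝ) * X 0 ^ J * g ^ (n + 1) + g ^ (n + 2) * B := by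
    rw [hφ, hB]
    simp only [map_add, pderiv_mul, pdpow 1 g (n+1) (n+2) rfl, pdpow 1 g (n+2) (n+3) rfl,
      pd1XJ, hg1]
    push_cast
    ring
  have h0 : pderiv 0 φ = A1 * g ^ (n + 2) - ((n + 2 : ℕ) : MvPolynomial (Fin 2) ℝ) * X 0 ^ J * gp * g ^ (n + 1) + g ^ (n + 2) * E := by
    rw [hφ, hE]
    simp only [map_add, pderiv_mul, pdpow 0 g (n+1) (n+2) rfl, pdpow 0 g (n+2) (n+3) rfl,
      hA1, hg0]
    push_cast
    ring
  set U : MvPolynomial (Fin 2) ℝ := ((n + 2 : ℕ) : MvPolynomial (Fin 2) ℝ) * B + g * pderiv 1 B with hU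
  set V : MvPolynomial (Fin 2) ℝ := ((n + 2 : ℕ) : MvPolynomial (Fin 2) ℝ) * A1 - ((n + 2 : ℕ) : MvPolynomial (Fin 2) ℝ) * gp * B + g * pderiv 0 B with hV
  set W : MvPolynomial (Fin 2) ℝ := pderiv 0 A1 * g - ((n + 2 : ℕ) : MvPolynomial (Fin 2) ℝ) * A1 * gp - ((n + 2 : ℕ) : MvPolynomial (Fin 2) ℝ) * A1 * gp - ((n + 2 : ℕ) : MvPolynomial (Fin 2) ℝ) * X 0 ^ J * gpp - ((n + 2 : ℕ) : MvPolynomial (Fin 2) ℝ) * gp * E + g * pderiv 0 E with hW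
  have h11 : pderiv 1 (pderiv 1 φ) = ((n + 2 : ℕ) : MvPolynomial (Fin 2) ℝ) * ((n + 1 : ℕ) : MvPolynomial (Fin 2) ℝ) * X 0 ^ J * g ^ n + g ^ (n + 1) * U := by
    rw [h1, hU]
    simp only [map_add, pderiv_mul, pdpow 1 g n (n+1) rfl, pdpow 1 g (n+1) (n+2) rfl,
      pd1XJ, pdc, hg1]
    push_cast
    ring
  have h01 : pderiv 0 (pderiv 1 φ) = -(((n + 2 : ℕ) : MvPolynomial (Fin 2) ℝ) * ((n + 1 : ℕ) : MvPolynomial (Fin 2) ℝ) * X 0 ^ J * gp * g ^ n) + g ^ (n + 1) * V := by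
    rw [h1, hV]
    simp only [map_add, pderiv_mul, pdpow 0 g n (n+1) rfl, pdpow 0 g (n+1) (n+2) rfl,
      hA1, pdc, hg0]
    push_cast
    ring
  have h00 : pderiv 0 (pderiv 0 φ) = ((n + 2 : ℕ) : MvPolynomial (Fin 2) ℝ) * ((n + 1 : ℕ) : MvPolynomial (Fin 2) ℝ) * X 0 ^ J * gp ^ 2 * g ^ n + g ^ (n + 1) * W := by
    rw [h0, hW]
    simp only [map_add, map_sub, pderiv_mul, pdpow 0 g n (n+1) rfl, pdpow 0 g (n+1) (n+2) rfl,
      hA1, pdc, hg0, hDgp]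
    push_cast
    ring
  set T : MvPolynomial (Fin 2) ℝ := gp ^ 2 * pderiv 1 B + pderiv 0 A1 + pderiv 0 E - ((n + 2 : ℕ) : MvPolynomial (Fin 2) ℝ) * gp * (pderiv 0 q + gp * pderiv 1 q) + 2 * gp * pderiv 0 B with hT
  have hM : gp ^ 2 * U + W + 2 * gp * V = -(((n + 2 : ℕ) : MvPolynomial (Fin 2) ℝ) * X 0 ^ J * gpp) + g * T := by
    rw [hU, hV, hW, hT, hB, hE]
    push_cast
    ring
  have hω : hessDet φ = ((n + 2 : ℕ) : MvPolynomial (Fin 2) ℝ) * ((n + 1 : ℕ) : MvPolynomial (Fin 2) ℝ) * X 0 ^ J * g ^ (2 * n + 1) * (gp ^ 2 * U + W + 2 * gp * V) + g ^ (2 * n + 2) * (W * U - V ^ 2) := by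
    unfold hessDet
    rw [h11, h01, h00]
    push_cast
    ring
  rw [hM] at hω
  refine ⟨-(((n + 2 : ℕ) : ℝ) ^ 2 * ((n + 1 : ℕ) : ℝ) * ((s + 2 : ℕ) : ℝ) * ((s + 1 : ℕ) : ℝ)),
    g ^ (2 * n + 2) * (((n + 2 : ℕ) : MvPolynomial (Fin 2) ℝ) * ((n + 1 : ℕ) : MvPolynomial (Fin 2) ℝ) * X 0 ^ J * T + (W * U - V ^ 2)), ?_, ?_, dvd_mul_right _ _⟩
  · have hpos : (0:ℝ) < ((n + 2 : ℕ) : ℝ) ^ 2 * ((n + 1 : ℕ) : ℝ) * ((s + 2 : ℕ) : ℝ) * ((s + 1 : ℕ) : ℝ) := by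
      positivity
    exact neg_ne_zero.mpr hpos.ne'
  · rw [hω, hgppdef]
    simp only [map_neg, map_mul, map_pow, map_natCast]
    push_cast
    ring
end

section
/- Let φ ∈ ℝ[z₁,z₂], J ≥ 2, l ≥ 1, r, s ≥ 1 with ls ≥ 2 and J − lr ≥ 0, and let c ≠ 0. Suppose that φ − z₁^J − c z₁^{J−lr} z₂^{ls} is divisible by z₂^{ls+1}. Then the Hessian determinant ω := ∂₁²φ·∂₂²φ − (∂₁∂₂φ)² satisfies ω = C z₁^{2J−lr−2} z₂^{ls−2} + ρ, where C ≠ 0 is a real constant and ρ ∈ ℝ[z₁,z₂] is divisible by z₂^{ls−1}. -/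
set_option maxHeartbeats 1600000

open MvPolynomial

/-- If `φ − z₁^J − c z₁^{J−lr} z₂^{ls}` is divisible by `z₂^{ls+1}`
(with `J ≥ 2`, `l ≥ 1`, `r, s ≥ 1`, `ls ≥ 2`, `J − lr ≥ 0`, `c ≠ 0`), then
`ω = C z₁^{2J−lr−2} z₂^{ls−2} + ρ` with `C ≠ 0` and `z₂^{ls−1} ∣ ρ`. -/
theorem stmt_3 (φ : MvPolynomial (Fin 2) ℝ) (J l r s : ℕ) (c : ℝ)
    (hJ : 2 ≤ J) (hl : 1 ≤ l) (hr : 1 ≤ r) (hs : 1 ≤ s)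
    (hls : 2 ≤ l * s) (hJlr : l * r ≤ J) (hc : c ≠ 0)
    (hdvd : (X 1 : MvPolynomial (Fin 2) ℝ) ^ (l * s + 1) ∣
      φ - X 0 ^ J - C c * X 0 ^ (J - l * r) * X 1 ^ (l * s)) :
    ∃ (c' : ℝ) (ρ : MvPolynomial (Fin 2) ℝ), c' ≠ 0 ∧
      hessDet φ = C c' * X 0 ^ (2 * J - l * r - 2) * X 1 ^ (l * s - 2) + ρ ∧
      (X 1 : MvPolynomial (Fin 2) ℝ) ^ (l * s - 1) ∣ ρ := by
  obtain ⟨q, hq⟩ := hdvd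
  obtain ⟨n, hn⟩ : ∃ n, J = n + 2 := ⟨J - 2, by omega⟩
  obtain ⟨k, hk⟩ : ∃ k, l * s = k + 2 := ⟨l * s - 2, by omega⟩
  set a := J - l * r with ha
  have hφ : φ = X 0 ^ (n+2) + C c * X 0 ^ a * X 1 ^ (k+2) + X 1 ^ (k+3) * q := by
    rw [← hn, ← show k + 2 + 1 = k + 3 from rfl, ← hk]
    linear_combination hq
  rw [show 2 * J - l * r - 2 = n + a by omega, show l * s - 2 = k by omega,
    show l * s - 1 = k + 1 by omega]
  have h01 : pderiv 1 (X 0 : MvPolynomial (Fin 2) ℝ) = 0 := pderiv_X_of_ne (by decide)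
  have h10 : pderiv 0 (X 1 : MvPolynomial (Fin 2) ℝ) = 0 := pderiv_X_of_ne (by decide)
  have h00 : pderiv 0 (X 0 : MvPolynomial (Fin 2) ℝ) = 1 := pderiv_X_self 0
  have h11 : pderiv 1 (X 1 : MvPolynomial (Fin 2) ℝ) = 1 := pderiv_X_self 1
  have hpn : ∀ (i : Fin 2) (m : ℕ), pderiv i ((m : MvPolynomial (Fin 2) ℝ)) = 0 := by
    intro i m
    rw [← map_natCast (C : ℝ →+* MvPolynomial (Fin 2) ℝ), pderiv_C]
  set P : MvPolynomial (Fin 2) ℝ := X 0 with hP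
  set Q : MvPolynomial (Fin 2) ℝ := X 1 with hQ
  set q0 := pderiv 0 q with hq0
  set q1 := pderiv 1 q with hq1
  set q00 := pderiv 0 q0 with hq00
  set q01 := pderiv 0 q1 with hq01
  set q11 := pderiv 1 q1 with hq11
  set A : ℕ → MvPolynomial (Fin 2) ℝ := fun m => ((m : ℕ) : MvPolynomial (Fin 2) ℝ) with hA
  have hd0 : pderiv 0 φ =
      A (n+2) * P^(n+1) + C c * A a * P^(a-1) * Q^(k+2) + Q^(k+3) * q0 := by
    rw [hφ, hq0, hA]
    simp only [map_add, pderiv_mul, pderiv_pow, h00, h11, h01, h10, hpn, pderiv_C_mul, pderiv_C]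
    push_cast
    ring
  have hd1 : pderiv 1 φ =
      C c * A (k+2) * P^a * Q^(k+1) + A (k+3) * Q^(k+2) * q + Q^(k+3) * q1 := by
    rw [hφ, hq1, hA]
    simp only [map_add, pderiv_mul, pderiv_pow, h00, h11, h01, h10, hpn, pderiv_C_mul, pderiv_C]
    push_cast
    ring
  have hd00 : pderiv 0 (pderiv 0 φ) =
      A (n+2) * A (n+1) * P^n + C c * A a * A (a-1) * P^(a-1-1) * Q^(k+2) + Q^(k+3) * q00 := by
    rw [hd0, hq00, hA]
    simp only [map_add, pderiv_mul, pderiv_pow, h00, h11, h01, h10, hpn, pderiv_C_mul, pderiv_C]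
    push_cast
    ring
  have hd11 : pderiv 1 (pderiv 1 φ) =
      C c * A (k+2) * A (k+1) * P^a * Q^k + A (k+3) * A (k+2) * Q^(k+1) * q
        + 2 * A (k+3) * Q^(k+2) * q1 + Q^(k+3) * q11 := by
    rw [hd1, hq11, hA]
    simp only [map_add, pderiv_mul, pderiv_pow, h00, h11, h01, h10, hpn, pderiv_C_mul, pderiv_C]
    push_cast
    ring
  have hd01 : pderiv 0 (pderiv 1 φ) =
      C c * A a * A (k+2) * P^(a-1) * Q^(k+1) + A (k+3) * Q^(k+2) * q0 + Q^(k+3) * q01 := by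
    rw [hd1, hq01, hq0, hA]
    simp only [map_add, pderiv_mul, pderiv_pow, h00, h11, h01, h10, hpn, pderiv_C_mul, pderiv_C]
    push_cast
    ring
  set c' : ℝ := c * (((n+2 : ℕ) : ℝ) * ((n+1 : ℕ) : ℝ) * (((k+2 : ℕ) : ℝ) * ((k+1 : ℕ) : ℝ))) with hc'
  have hc'0 : c' ≠ 0 := by
    apply mul_ne_zero hc
    positivity
  set W : MvPolynomial (Fin 2) ℝ :=
    A (n+2) * A (n+1) * P^n *
        (A (k+3) * A (k+2) * q + 2 * A (k+3) * Q * q1 + Q^2 * q11)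
      + Q^(k+1) *
        ((C c * A a * A (a-1) * P^(a-1-1) + Q * q00) *
          (C c * A (k+2) * A (k+1) * P^a
            + Q * (A (k+3) * A (k+2) * q + 2 * A (k+3) * Q * q1 + Q^2 * q11))
         - (C c * A a * A (k+2) * P^(a-1) + A (k+3) * Q * q0 + Q^2 * q01) ^ 2) with hW
  refine ⟨c', Q ^ (k+1) * W, hc'0, ?_, Dvd.intro _ rfl⟩
  have hC : (C c' : MvPolynomial (Fin 2) ℝ)
      = C c * A (n+2) * A (n+1) * (A (k+2) * A (k+1)) := by
    rw [hc', hA]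
    simp only [map_mul, map_natCast]
    ring
  rw [hessDet, hd00, hd11, hd01, hW, hC, hA]
  push_cast
  ring
end

section
/- Let J ≥ 1 and let φ(z₁,z₂) = z₁^J + c₁z₁^{J−1}z₂ + c₂z₁^{J−2}z₂² + ⋯ + c_J z₂^J be a homogeneous real polynomial of degree J with c₁ ≠ 0. If the Hessian determinant ω := ∂₁²φ·∂₂²φ − (∂₁∂₂φ)² is divisible by z₂^{J−1}, then φ = (z₁ + (c₁/J)z₂)^J, and consequently ω ≡ 0. -/
open MvPolynomial

noncomputable def fs (p q : ℕ) : Fin 2 →₀ ℕ := Finsupp.single 0 p + Finsupp.single 1 q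

lemma fs_eq_iff {p q r s : ℕ} : fs p q = fs r s ↔ p = r ∧ q = s := by
  constructor
  · intro h
    constructor
    · have := DFunLike.congr_fun h 0; simpa [fs] using this
    · have := DFunLike.congr_fun h 1; simpa [fs] using this
  · rintro ⟨rfl, rfl⟩; rfl

lemma fs_add (p q r s : ℕ) : fs p q + fs r s = fs (p+r) (q+s) := by
  ext x; fin_cases x <;> simp [fs]

lemma fs_apply0 (p q : ℕ) : (fs p q) 0 = p := by simp [fs]
lemma fs_apply1 (p q : ℕ) : (fs p q) 1 = q := by simp [fs]

lemma fs_sub0 (p q : ℕ) : fs p q - Finsupp.single 0 1 = fs (p-1) q := by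
  ext x; fin_cases x <;> simp [fs]
lemma fs_sub1 (p q : ℕ) : fs p q - Finsupp.single 1 1 = fs p (q-1) := by
  ext x; fin_cases x <;> simp [fs]

lemma mono_eq (p q : ℕ) (a : ℝ) :
    C a * X 0 ^ p * X 1 ^ q = monomial (fs p q) (a : ℝ) := by
  rw [X_pow_eq_monomial, X_pow_eq_monomial, C_apply, monomial_mul, monomial_mul, fs]
  simp

lemma pd0_mono (p q : ℕ) (a : ℝ) :
    pderiv 0 (monomial (fs p q) a : MvPolynomial (Fin 2) ℝ) = monomial (fs (p-1) q) (a * p) := by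
  rw [pderiv_monomial, fs_sub0, fs_apply0]

lemma pd1_mono (p q : ℕ) (a : ℝ) :
    pderiv 1 (monomial (fs p q) a : MvPolynomial (Fin 2) ℝ) = monomial (fs p (q-1)) (a * q) := by
  rw [pderiv_monomial, fs_sub1, fs_apply1]

lemma hess_pow (t : ℝ) (J : ℕ) : hessDet ((X 0 + C t * X 1)^J) = 0 := by
  have h0 : ∀ m : ℕ, pderiv 0 ((X 0 + C t * X 1 : MvPolynomial (Fin 2) ℝ) ^ m)
      = C (m : ℝ) * (X 0 + C t * X 1) ^ (m-1) := by
    intro m; rw [Derivation.leibniz_pow]; simp [pderiv_X]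
  have h1 : ∀ m : ℕ, pderiv 1 ((X 0 + C t * X 1 : MvPolynomial (Fin 2) ℝ) ^ m)
      = C t * C (m : ℝ) * (X 0 + C t * X 1) ^ (m-1) := by
    intro m; rw [Derivation.leibniz_pow]; simp [pderiv_X]; ring
  rw [hessDet, h0, h1]
  simp only [pderiv_mul, pderiv_C, h0, h1, zero_mul, zero_add, mul_zero, add_zero]
  ring

lemma binom (t : ℝ) (J : ℕ) : (X 0 + C t * X 1 : MvPolynomial (Fin 2) ℝ)^J
    = ∑ j ∈ Finset.range (J+1), monomial (fs (J-j) j) ((J.choose j : ℝ) * t^j) := by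
  rw [add_comm (X 0 : MvPolynomial (Fin 2) ℝ), add_pow]
  refine Finset.sum_congr rfl fun j _ => ?_
  rw [← mono_eq]
  rw [mul_pow, ← C_pow, ← map_natCast (C : ℝ →+* MvPolynomial (Fin 2) ℝ), map_mul]
  ring

/-- sum-of-monomials shape -/
noncomputable def SJ (J : ℕ) (a : ℕ → ℝ) : MvPolynomial (Fin 2) ℝ :=
  ∑ j ∈ Finset.range (J+1), monomial (fs (J-j) j) (a j)

lemma pd00_SJ (J : ℕ) (a : ℕ → ℝ) :
    pderiv 0 (pderiv 0 (SJ J a)) =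
      ∑ j ∈ Finset.range (J+1), monomial (fs (J-j-2) j) (a j * (J-j : ℕ) * (J-j-1 : ℕ)) := by
  rw [SJ, map_sum, map_sum]
  refine Finset.sum_congr rfl fun j _ => ?_
  rw [pd0_mono, pd0_mono, show J-j-1-1 = J-j-2 by omega]

lemma pd11_SJ (J : ℕ) (a : ℕ → ℝ) :
    pderiv 1 (pderiv 1 (SJ J a)) =
      ∑ j ∈ Finset.range (J+1), monomial (fs (J-j) (j-2)) (a j * (j : ℕ) * (j-1 : ℕ)) := by
  rw [SJ, map_sum, map_sum]
  refine Finset.sum_congr rfl fun j _ => ?_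
  rw [pd1_mono, pd1_mono, show j-1-1 = j-2 by omega]

lemma pd01_SJ (J : ℕ) (a : ℕ → ℝ) :
    pderiv 0 (pderiv 1 (SJ J a)) =
      ∑ j ∈ Finset.range (J+1), monomial (fs (J-j-1) (j-1)) (a j * (j : ℕ) * (J-j : ℕ)) := by
  rw [SJ, map_sum, map_sum]
  refine Finset.sum_congr rfl fun j _ => ?_
  rw [pd1_mono, pd0_mono]

lemma coeff_sum_mul_sum (n : ℕ) (s1 s2 : ℕ → Fin 2 →₀ ℕ) (u v : ℕ → ℝ) (ν : Fin 2 →₀ ℕ) :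
    coeff ν ((∑ i ∈ Finset.range n, (monomial (s1 i) (u i) : MvPolynomial (Fin 2) ℝ)) *
      (∑ l ∈ Finset.range n, (monomial (s2 l) (v l) : MvPolynomial (Fin 2) ℝ))) =
    ∑ i ∈ Finset.range n, ∑ l ∈ Finset.range n,
      (if s1 i + s2 l = ν then u i * v l else 0) := by
  rw [Finset.sum_mul_sum, coeff_sum]
  refine Finset.sum_congr rfl fun i _ => ?_
  rw [coeff_sum]
  refine Finset.sum_congr rfl fun l _ => ?_
  rw [monomial_mul, coeff_monomial]

lemma key (J k : ℕ) (hk2 : 2 ≤ k) (hkJ : k ≤ J) (t : ℝ) (d : ℕ → ℝ)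
    (hd : ∀ l, l < k → d l = 0) :
    coeff (fs (2*J-2-k) (k-2)) (hessDet ((X 0 + C t * X 1)^J + SJ J d))
      = ((J:ℝ) * ((J-1 : ℕ) : ℝ) * ((k:ℝ) * ((k-1 : ℕ) : ℝ))) * d k := by
  have hJ2 : 2 ≤ J := le_trans hk2 hkJ
  set b : ℕ → ℝ := fun j => ((J.choose j : ℝ) * t^j) with hb
  have hP : (X 0 + C t * X 1 : MvPolynomial (Fin 2) ℝ)^J = SJ J b := binom t J
  have expand : hessDet (SJ J b + SJ J d) = hessDet (SJ J b)
      + (pderiv 0 (pderiv 0 (SJ J b)) * pderiv 1 (pderiv 1 (SJ J d))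
        + pderiv 0 (pderiv 0 (SJ J d)) * pderiv 1 (pderiv 1 (SJ J b))
        + pderiv 0 (pderiv 0 (SJ J d)) * pderiv 1 (pderiv 1 (SJ J d)))
      - (pderiv 0 (pderiv 1 (SJ J b)) * pderiv 0 (pderiv 1 (SJ J d))
        + pderiv 0 (pderiv 1 (SJ J d)) * pderiv 0 (pderiv 1 (SJ J b))
        + pderiv 0 (pderiv 1 (SJ J d)) * pderiv 0 (pderiv 1 (SJ J d))) := by
    simp only [hessDet, map_add]; ring
  rw [hP, expand]
  rw [coeff_sub, coeff_add, coeff_add, coeff_add, coeff_add, coeff_add]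
  have hz : hessDet (SJ J b) = 0 := by rw [← hP]; exact hess_pow t J
  rw [hz, coeff_zero]
  set ν := fs (2*J-2-k) (k-2) with hν
  have S1 : coeff ν (pderiv 0 (pderiv 0 (SJ J b)) * pderiv 1 (pderiv 1 (SJ J d)))
      = ((J:ℝ) * ((J-1 : ℕ) : ℝ) * ((k:ℝ) * ((k-1 : ℕ) : ℝ))) * d k := by
    rw [pd00_SJ, pd11_SJ, coeff_sum_mul_sum]
    rw [Finset.sum_eq_single_of_mem 0 (by simp)]
    · rw [Finset.sum_eq_single_of_mem k (by simp; omega)]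
      · rw [if_pos (by rw [fs_add, fs_eq_iff]; omega)]
        have : b 0 = 1 := by simp [hb]
        rw [this]
        push_cast
        have h1 : (J : ℝ) - 0 = J := by ring
        simp only [Nat.sub_zero]
        ring
      · intro l _ hlk
        split_ifs with h
        · rcases lt_or_ge l k with hl | hl
          · simp [hd l hl]
          · exfalso; rw [fs_add, fs_eq_iff] at h; omega
        · rfl
    · intro i _ hi0
      refine Finset.sum_eq_zero fun l _ => ?_
      split_ifs with h
      · rcases lt_or_ge l k with hl | hl
        · simp [hd l hl]
        · exfalso; rw [fs_add, fs_eq_iff] at h; omega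
      · rfl
  have S2 : coeff ν (pderiv 0 (pderiv 0 (SJ J d)) * pderiv 1 (pderiv 1 (SJ J b))) = 0 := by
    rw [pd00_SJ, pd11_SJ, coeff_sum_mul_sum]
    refine Finset.sum_eq_zero fun i _ => Finset.sum_eq_zero fun l _ => ?_
    split_ifs with h
    · rcases lt_or_ge i k with hi | hi
      · simp [hd i hi]
      · rcases lt_or_ge l 2 with hl | hl
        · interval_cases l <;> simp
        · exfalso; rw [fs_add, fs_eq_iff] at h; omega
    · rfl
  have S3 : coeff ν (pderiv 0 (pderiv 0 (SJ J d)) * pderiv 1 (pderiv 1 (SJ J d))) = 0 := by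
    rw [pd00_SJ, pd11_SJ, coeff_sum_mul_sum]
    refine Finset.sum_eq_zero fun i _ => Finset.sum_eq_zero fun l _ => ?_
    split_ifs with h
    · rcases lt_or_ge i k with hi | hi
      · simp [hd i hi]
      · rcases lt_or_ge l k with hl | hl
        · simp [hd l hl]
        · exfalso; rw [fs_add, fs_eq_iff] at h; omega
    · rfl
  have S4 : coeff ν (pderiv 0 (pderiv 1 (SJ J b)) * pderiv 0 (pderiv 1 (SJ J d))) = 0 := by
    simp only [pd01_SJ]; rw [coeff_sum_mul_sum]
    refine Finset.sum_eq_zero fun i _ => Finset.sum_eq_zero fun l _ => ?_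
    split_ifs with h
    · rcases lt_or_ge l k with hl | hl
      · simp [hd l hl]
      · rcases Nat.eq_zero_or_pos i with hi | hi
        · simp [hi]
        · exfalso; rw [fs_add, fs_eq_iff] at h; omega
    · rfl
  have S5 : coeff ν (pderiv 0 (pderiv 1 (SJ J d)) * pderiv 0 (pderiv 1 (SJ J b))) = 0 := by
    simp only [pd01_SJ]; rw [coeff_sum_mul_sum]
    refine Finset.sum_eq_zero fun i _ => Finset.sum_eq_zero fun l _ => ?_
    split_ifs with h
    · rcases lt_or_ge i k with hi | hi
      · simp [hd i hi]
      · rcases Nat.eq_zero_or_pos l with hl | hl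
        · simp [hl]
        · exfalso; rw [fs_add, fs_eq_iff] at h; omega
    · rfl
  have S6 : coeff ν (pderiv 0 (pderiv 1 (SJ J d)) * pderiv 0 (pderiv 1 (SJ J d))) = 0 := by
    simp only [pd01_SJ]; rw [coeff_sum_mul_sum]
    refine Finset.sum_eq_zero fun i _ => Finset.sum_eq_zero fun l _ => ?_
    split_ifs with h
    · rcases lt_or_ge i k with hi | hi
      · simp [hd i hi]
      · rcases lt_or_ge l k with hl | hl
        · simp [hd l hl]
        · exfalso; rw [fs_add, fs_eq_iff] at h; omega
    · rfl
  rw [S1, S2, S3, S4, S5, S6]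
  ring

/-- If φ = z₁^J + c₁z₁^{J−1}z₂ + ⋯ + c_J z₂^J is homogeneous of degree J ≥ 1 with c₁ ≠ 0,
and z₂^{J−1} divides the Hessian determinant ω of φ, then φ = (z₁ + (c₁/J)z₂)^J and ω ≡ 0. -/
theorem stmt_7 (J : ℕ) (hJ : 1 ≤ J) (c : ℕ → ℝ) (hc0 : c 0 = 1) (hc1 : c 1 ≠ 0)
    (φ : MvPolynomial (Fin 2) ℝ)
    (hφ : φ = ∑ k ∈ Finset.range (J + 1), C (c k) * X 0 ^ (J - k) * X 1 ^ k)
    (hdvd : (X 1 : MvPolynomial (Fin 2) ℝ) ^ (J - 1) ∣ hessDet φ) :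
    φ = (X 0 + C (c 1 / (J : ℝ)) * X 1) ^ J ∧ hessDet φ = 0 := by
  have hJR : (J : ℝ) ≠ 0 := Nat.cast_ne_zero.mpr (by omega)
  set t : ℝ := c 1 / J with ht
  set b : ℕ → ℝ := fun j => ((J.choose j : ℝ) * t^j) with hb
  have hφSJ : φ = SJ J c := by
    rw [hφ, SJ]; exact Finset.sum_congr rfl fun j _ => mono_eq _ _ _
  -- main claim by strong induction
  have main : ∀ k, k ≤ J → c k = b k := by
    intro k
    induction k using Nat.strong_induction_on with
    | _ k ih =>
      intro hkJ
      match k, hkJ with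
      | 0, _ => simp [hb, hc0]
      | 1, h1 => simp [hb, ht]; field_simp
      | (m+2), hkJ =>
        set k := m + 2
        have hk2 : 2 ≤ k := by omega
        set d : ℕ → ℝ := fun j => c j - b j with hd
        have hdlt : ∀ l, l < k → d l = 0 := by
          intro l hl
          simp only [hd, sub_eq_zero]
          exact ih l hl (by omega)
        have hsplit : φ = (X 0 + C t * X 1)^J + SJ J d := by
          rw [binom, hφSJ, SJ, SJ, ← Finset.sum_add_distrib]
          refine Finset.sum_congr rfl fun j _ => ?_
          rw [← map_add]
          congr 1
          simp [hd, hb]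
        have hco := key J k hk2 hkJ t d hdlt
        rw [← hsplit] at hco
        -- divisibility gives coefficient zero
        obtain ⟨ψ, hψ⟩ := hdvd
        have hzero : coeff (fs (2*J-2-k) (k-2)) (hessDet φ) = 0 := by
          rw [hψ, X_pow_eq_monomial, coeff_monomial_mul']
          rw [if_neg]
          intro hle
          have := hle 1
          simp [fs] at this
          omega
        rw [hzero] at hco
        have hR : ((J:ℝ) * ((J-1 : ℕ) : ℝ) * ((k:ℝ) * ((k-1 : ℕ) : ℝ))) ≠ 0 := by
          have h1 : (0:ℝ) < J := Nat.cast_pos.mpr (by omega)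
          have h2 : (0:ℝ) < ((J-1 : ℕ) : ℝ) := Nat.cast_pos.mpr (by omega)
          have h3 : (0:ℝ) < (k:ℝ) := Nat.cast_pos.mpr (by omega)
          have h4 : (0:ℝ) < ((k-1 : ℕ) : ℝ) := Nat.cast_pos.mpr (by omega)
          positivity
        have : d k = 0 := by
          rcases mul_eq_zero.mp hco.symm with h | h
          · exact absurd h hR
          · exact h
        simpa [hd, sub_eq_zero] using this
  have hfin : φ = (X 0 + C t * X 1)^J := by
    rw [hφSJ, binom, SJ]
    exact Finset.sum_congr rfl fun j hj => by
      rw [main j (by simp at hj; omega)]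
  exact ⟨hfin, by rw [hfin]; exact hess_pow t J⟩
end

section
/- Let φ: ℝ² → ℝ be any polynomial and let 1 ≤ p, q ≤ ∞. If the operator T = T_{[−1,1]²} is of restricted weak type (p,q), then p ≤ q, q ≤ 3p, and 1/q ≥ 3/p − 2. -/
/-!
Test the restricted weak-type inequality on families of pairs `(E_δ, F_δ)`, `δ → 0`, whose
measures and pairing `⟨T χ_E, χ_F⟩` are comparable to powers of `δ`: the inequality
`δ^γ ≲ δ^(α/p + β(1 - 1/q))` forces `α/p + β(1 - 1/q) ≤ γ`. Three families give the three
constraints: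
* boxes of side `≈ 1/δ`, with `T χ_E = 4` on `F` (`α = β = γ = -3`): `p ≤ q`;
* `E` the `δ`-neighbourhood of the reflected graph `{(u, -φ(-u))}` and `F` a `δ`-cube
  (`α = 1`, `β = γ = 3`): `q ≤ 3p`;
* `E` a `δ`-cube and `F` the `δ`-neighbourhood of the graph of `φ`; each point of `F` sees a
  square of parameters of side `≈ δ` landing in `E` (`α = γ = 3`, `β = 1`): `1/q ≥ 3/p - 2`.
-/

open MeasureTheory MvPolynomial
open scoped ENNReal

/-- The averaging operator `T_R f(x) = ∫_R f(x₁ − t₁, x₂ − t₂, x₃ − φ(t)) dt`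
acting on nonnegative measurable functions on ℝ³. -/
noncomputable def avgOp (φ : ℝ × ℝ → ℝ) (R : Set (ℝ × ℝ))
    (f : ℝ × ℝ × ℝ → ℝ≥0∞) (x : ℝ × ℝ × ℝ) : ℝ≥0∞ :=
  ∫⁻ t in R, f (x.1 - t.1, x.2.1 - t.2, x.2.2 - φ t)

/-- The bilinear pairing `⟨T_R χ_E, χ_F⟩`. -/
noncomputable def pairing (φ : ℝ × ℝ → ℝ) (R : Set (ℝ × ℝ))
    (E F : Set (ℝ × ℝ × ℝ)) : ℝ≥0∞ :=
  ∫⁻ x, avgOp φ R (E.indicator 1) x * F.indicator 1 x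

/-- `T_R` is of restricted weak type `(p,q)`, written in terms of the reciprocals
`pinv = 1/p`, `qinv = 1/q` (so `1 ≤ p, q ≤ ∞` corresponds to `pinv, qinv ∈ [0,1]`):
there is `C < ∞` with `⟨T_R χ_E, χ_F⟩ ≤ C |E|^{1/p} |F|^{1−1/q}` for all measurable
`E, F ⊆ ℝ³` of finite measure. -/
def RWT (φ : ℝ × ℝ → ℝ) (R : Set (ℝ × ℝ)) (pinv qinv : ℝ) : Prop :=
  ∃ C : ℝ, 0 ≤ C ∧ ∀ E F : Set (ℝ × ℝ × ℝ), MeasurableSet E → MeasurableSet F →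
    volume E < ⊤ → volume F < ⊤ →
    pairing φ R E F ≤ ENNReal.ofReal C * volume E ^ pinv * volume F ^ (1 - qinv)

/-- The unit square `[−1,1]²` in ℝ². -/
def unitSquare : Set (ℝ × ℝ) := Set.Icc ((-1, -1) : ℝ × ℝ) (1, 1)

open Filter Topology Set
open scoped NNReal

lemma le_of_eventually_mul_rpow_le {c K γ e : ℝ} (hc : 0 < c)
    (h : ∀ᶠ δ in 𝓝[>] (0 : ℝ), c * δ ^ γ ≤ K * δ ^ e) : e ≤ γ := by
  by_contra! hγe
  have hlim : Tendsto (fun δ : ℝ => K * δ ^ (e - γ)) (𝓝[>] 0) (𝓝 0) := by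
    have := ((Real.continuousAt_rpow_const 0 (e - γ) (Or.inr (sub_pos.2 hγe).le)).tendsto.mono_left
      (nhdsWithin_le_nhds (s := Ioi 0))).const_mul K
    simpa [Real.zero_rpow (sub_pos.2 hγe).ne'] using this
  obtain ⟨δ, hle, hlt, hδ⟩ :=
    (h.and ((hlim.eventually (gt_mem_nhds hc)).and self_mem_nhdsWithin)).exists
  have hδγ : 0 < δ ^ γ := Real.rpow_pos_of_pos hδ γ
  have : K * δ ^ e = K * δ ^ (e - γ) * δ ^ γ := by
    rw [mul_assoc, ← Real.rpow_add hδ, sub_add_cancel]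
  nlinarith

lemma volume_Icc_prod_Icc_prod_Icc {a₁ b₁ a₂ b₂ a₃ b₃ : ℝ} (h₁ : a₁ ≤ b₁) (h₂ : a₂ ≤ b₂) :
    volume (Icc a₁ b₁ ×ˢ Icc a₂ b₂ ×ˢ Icc a₃ b₃)
      = ENNReal.ofReal ((b₁ - a₁) * (b₂ - a₂) * (b₃ - a₃)) := by
  rw [Measure.volume_eq_prod, Measure.prod_prod, Measure.volume_eq_prod, Measure.prod_prod,
    Real.volume_Icc, Real.volume_Icc, Real.volume_Icc, ENNReal.ofReal_mul (by nlinarith),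
    ENNReal.ofReal_mul (by linarith), mul_assoc]

lemma unitSquare_eq : unitSquare = Icc (-1) 1 ×ˢ Icc (-1) 1 := (Icc_prod_Icc _ _ _ _).symm

lemma measurableSet_unitSquare : MeasurableSet unitSquare := measurableSet_Icc

lemma isCompact_unitSquare : IsCompact unitSquare := isCompact_Icc

lemma volume_unitSquare : volume unitSquare = 4 := by
  rw [unitSquare_eq, Measure.volume_eq_prod, Measure.prod_prod, Real.volume_Icc,
    ← ENNReal.ofReal_mul (by norm_num)]
  norm_num

def graphNbhd (h : ℝ × ℝ → ℝ) (D : Set (ℝ × ℝ)) (ε : ℝ) : Set (ℝ × ℝ × ℝ) :=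
  {x | (x.1, x.2.1) ∈ D ∧ |x.2.2 - h (x.1, x.2.1)| < ε}

lemma graphNbhd_eq_preimage_regionBetween (h : ℝ × ℝ → ℝ) (D : Set (ℝ × ℝ)) (ε : ℝ) :
    graphNbhd h D ε = MeasurableEquiv.prodAssoc.symm ⁻¹'
      regionBetween (fun y => h y - ε) (fun y => h y + ε) D := by
  ext ⟨x₁, x₂, x₃⟩
  change (x₁, x₂) ∈ D ∧ |x₃ - h (x₁, x₂)| < ε
    ↔ (x₁, x₂) ∈ D ∧ x₃ ∈ Ioo (h (x₁, x₂) - ε) (h (x₁, x₂) + ε)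
  rw [← Real.dist_eq, ← Metric.mem_ball, Real.ball_eq_Ioo]

lemma measurableSet_graphNbhd {h : ℝ × ℝ → ℝ} (hh : Measurable h) {D : Set (ℝ × ℝ)}
    (hD : MeasurableSet D) (ε : ℝ) : MeasurableSet (graphNbhd h D ε) := by
  rw [graphNbhd_eq_preimage_regionBetween]
  exact MeasurableEquiv.prodAssoc.symm.measurable
    (measurableSet_regionBetween (by fun_prop) (by fun_prop) hD)

lemma volume_graphNbhd {h : ℝ × ℝ → ℝ} (hh : Measurable h) {D : Set (ℝ × ℝ)}
    (hD : MeasurableSet D) (ε : ℝ) :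
    volume (graphNbhd h D ε) = ENNReal.ofReal (2 * ε) * volume D := by
  rw [graphNbhd_eq_preimage_regionBetween, volume_preserving_prodAssoc.symm.measure_preimage_equiv,
    Measure.volume_eq_prod, volume_regionBetween_eq_lintegral' (by fun_prop) (by fun_prop) hD,
    ← setLIntegral_const]
  congr with y
  simp only [Pi.sub_apply]
  ring_nf

lemma volume_le_avgOp {φ : ℝ × ℝ → ℝ} {R S : Set (ℝ × ℝ)} {E : Set (ℝ × ℝ × ℝ)}
    {x : ℝ × ℝ × ℝ} (hS : MeasurableSet S) (hSR : S ⊆ R)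
    (hmem : ∀ t ∈ S, (x.1 - t.1, x.2.1 - t.2, x.2.2 - φ t) ∈ E) :
    volume S ≤ avgOp φ R (E.indicator 1) x :=
  calc volume S = ∫⁻ _ in S, 1 := (setLIntegral_one S).symm
    _ ≤ ∫⁻ t in S, E.indicator 1 (x.1 - t.1, x.2.1 - t.2, x.2.2 - φ t) :=
        setLIntegral_mono' hS fun t ht => by simp [hmem t ht]
    _ ≤ avgOp φ R (E.indicator 1) x := lintegral_mono_set hSR

lemma mul_volume_le_pairing {φ : ℝ × ℝ → ℝ} {R : Set (ℝ × ℝ)} {E F : Set (ℝ × ℝ × ℝ)}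
    {c : ℝ≥0∞} (hF : MeasurableSet F) (h : ∀ x ∈ F, c ≤ avgOp φ R (E.indicator 1) x) :
    c * volume F ≤ pairing φ R E F :=
  calc c * volume F = ∫⁻ _ in F, c := (setLIntegral_const F c).symm
    _ ≤ ∫⁻ x in F, avgOp φ R (E.indicator 1) x * F.indicator 1 x :=
        setLIntegral_mono' hF fun x hx => by simpa [hx] using h x hx
    _ ≤ pairing φ R E F := setLIntegral_le_lintegral _ _

theorem RWT.le_of_scaling {φ : ℝ × ℝ → ℝ} {R : Set (ℝ × ℝ)} {pinv qinv : ℝ}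
    (h : RWT φ R pinv qinv) (hp : 0 ≤ pinv) (hq : qinv ≤ 1)
    {E F : ℝ → Set (ℝ × ℝ × ℝ)} {a b c α β γ : ℝ} (ha : 0 ≤ a) (hb : 0 ≤ b) (hc : 0 < c)
    (hEm : ∀ δ, MeasurableSet (E δ)) (hFm : ∀ δ, MeasurableSet (F δ))
    (hE : ∀ᶠ δ in 𝓝[>] 0, volume (E δ) ≤ ENNReal.ofReal (a * δ ^ α))
    (hF : ∀ᶠ δ in 𝓝[>] 0, volume (F δ) ≤ ENNReal.ofReal (b * δ ^ β))
    (hEF : ∀ᶠ δ in 𝓝[>] 0, ENNReal.ofReal (c * δ ^ γ) ≤ pairing φ R (E δ) (F δ)) :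
    α * pinv + β * (1 - qinv) ≤ γ := by
  obtain ⟨C, hC, hCEF⟩ := h
  refine le_of_eventually_mul_rpow_le hc (K := C * a ^ pinv * b ^ (1 - qinv)) ?_
  filter_upwards [hE, hF, hEF, self_mem_nhdsWithin] with δ hEδ hFδ hEFδ (hδ : 0 < δ)
  have hq' : 0 ≤ 1 - qinv := sub_nonneg.2 hq
  have key : ENNReal.ofReal (c * δ ^ γ)
      ≤ ENNReal.ofReal (C * (a * δ ^ α) ^ pinv * (b * δ ^ β) ^ (1 - qinv)) :=
    calc ENNReal.ofReal (c * δ ^ γ) ≤ pairing φ R (E δ) (F δ) := hEFδ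
      _ ≤ ENNReal.ofReal C * volume (E δ) ^ pinv * volume (F δ) ^ (1 - qinv) :=
        hCEF _ _ (hEm δ) (hFm δ) (hEδ.trans_lt ENNReal.ofReal_lt_top)
          (hFδ.trans_lt ENNReal.ofReal_lt_top)
      _ ≤ ENNReal.ofReal C * ENNReal.ofReal (a * δ ^ α) ^ pinv
          * ENNReal.ofReal (b * δ ^ β) ^ (1 - qinv) := by gcongr
      _ = _ := by
        rw [ENNReal.ofReal_rpow_of_nonneg (by positivity) hp,
          ENNReal.ofReal_rpow_of_nonneg (by positivity) hq', ← ENNReal.ofReal_mul hC,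
          ← ENNReal.ofReal_mul (by positivity)]
  calc c * δ ^ γ ≤ C * (a * δ ^ α) ^ pinv * (b * δ ^ β) ^ (1 - qinv) :=
        (ENNReal.ofReal_le_ofReal_iff (by positivity)).1 key
    _ = C * a ^ pinv * b ^ (1 - qinv) * δ ^ (α * pinv + β * (1 - qinv)) := by
        rw [Real.mul_rpow ha (by positivity), Real.mul_rpow hb (by positivity),
          ← Real.rpow_mul hδ.le, ← Real.rpow_mul hδ.le, Real.rpow_add hδ]
        ring

section ExponentConstraints

variable {φ : ℝ × ℝ → ℝ} {pinv qinv : ℝ}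

lemma le_pairing_box_cube {M ρ : ℝ} (hM : ∀ t ∈ unitSquare, ‖φ t‖ ≤ M) :
    4 * volume (Icc (-ρ) ρ ×ˢ Icc (-ρ) ρ ×ˢ Icc (-ρ) ρ)
      ≤ pairing φ unitSquare
        (Icc (-(ρ + 1)) (ρ + 1) ×ˢ Icc (-(ρ + 1)) (ρ + 1) ×ˢ Icc (-(ρ + M)) (ρ + M))
        (Icc (-ρ) ρ ×ˢ Icc (-ρ) ρ ×ˢ Icc (-ρ) ρ) := by
  refine mul_volume_le_pairing (measurableSet_Icc.prod (measurableSet_Icc.prod measurableSet_Icc))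
    fun x hx => volume_unitSquare ▸ volume_le_avgOp measurableSet_unitSquare subset_rfl
      fun t ht => ?_
  have hφt := abs_le.1 (hM t ht)
  simp only [mem_prod, mem_Icc] at hx ⊢
  rw [unitSquare_eq, mem_prod, mem_Icc, mem_Icc] at ht
  refine ⟨⟨?_, ?_⟩, ⟨?_, ?_⟩, ?_, ?_⟩ <;> linarith

theorem RWT.qinv_le_pinv (h : RWT φ unitSquare pinv qinv) (hp : 0 ≤ pinv) (hq : qinv ≤ 1)
    {M : ℝ} (hM : ∀ t ∈ unitSquare, ‖φ t‖ ≤ M) : qinv ≤ pinv := by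
  have hM0 : 0 ≤ M := (norm_nonneg _).trans (hM 0 (by simp [unitSquare, Prod.le_def]))
  have hsmall : ∀ᶠ δ in 𝓝[>] (0 : ℝ), δ ∈ Ioo 0 1 := Ioo_mem_nhdsGT one_pos
  have hcube : ∀ δ ∈ Ioo (0 : ℝ) 1, δ ^ (-3 : ℝ) = δ⁻¹ ^ 3 := fun δ hδ => by
    rw [Real.rpow_neg hδ.1.le, Real.rpow_ofNat, inv_pow]
  have hF : ∀ δ ∈ Ioo (0 : ℝ) 1, volume (Icc (-δ⁻¹) δ⁻¹ ×ˢ Icc (-δ⁻¹) δ⁻¹ ×ˢ Icc (-δ⁻¹) δ⁻¹)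
      = ENNReal.ofReal (8 * δ ^ (-3 : ℝ)) := fun δ hδ => by
    have : 0 ≤ δ⁻¹ := inv_nonneg.2 hδ.1.le
    rw [volume_Icc_prod_Icc_prod_Icc (by linarith) (by linarith), hcube δ hδ]
    ring_nf
  have key : -3 * pinv + -3 * (1 - qinv) ≤ -3 := by
    refine h.le_of_scaling hp hq (a := 32 * (M + 1)) (b := 8) (c := 32) (E := fun δ =>
        Icc (-(δ⁻¹ + 1)) (δ⁻¹ + 1) ×ˢ Icc (-(δ⁻¹ + 1)) (δ⁻¹ + 1) ×ˢ Icc (-(δ⁻¹ + M)) (δ⁻¹ + M))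
      (by positivity) (by norm_num) (by norm_num)
      (fun _ => measurableSet_Icc.prod (measurableSet_Icc.prod measurableSet_Icc))
      (fun _ => measurableSet_Icc.prod (measurableSet_Icc.prod measurableSet_Icc)) ?_
      (hsmall.mono fun δ hδ => (hF δ hδ).le) (hsmall.mono fun δ hδ => ?_)
    · filter_upwards [hsmall] with δ hδ
      have hρ : 1 ≤ δ⁻¹ := (one_le_inv₀ hδ.1).2 hδ.2.le
      rw [volume_Icc_prod_Icc_prod_Icc (by linarith) (by linarith), hcube δ hδ]
      refine ENNReal.ofReal_le_ofReal ?_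
      calc (δ⁻¹ + 1 - -(δ⁻¹ + 1)) * (δ⁻¹ + 1 - -(δ⁻¹ + 1)) * (δ⁻¹ + M - -(δ⁻¹ + M))
          = 8 * ((δ⁻¹ + 1) * (δ⁻¹ + 1)) * (δ⁻¹ + M) := by ring
        _ ≤ 8 * ((2 * δ⁻¹) * (2 * δ⁻¹)) * ((M + 1) * δ⁻¹) := by gcongr <;> nlinarith
        _ = 32 * (M + 1) * δ⁻¹ ^ 3 := by ring
    · calc ENNReal.ofReal (32 * δ ^ (-3 : ℝ))
          = 4 * volume (Icc (-δ⁻¹) δ⁻¹ ×ˢ Icc (-δ⁻¹) δ⁻¹ ×ˢ Icc (-δ⁻¹) δ⁻¹) := by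
            rw [hF δ hδ, ← ENNReal.ofReal_ofNat 4, ← ENNReal.ofReal_mul (by norm_num)]
            ring_nf
        _ ≤ _ := le_pairing_box_cube hM
  linarith

lemma le_pairing_graphNbhd_cube {K : ℝ≥0}
    (hK : LipschitzOnWith K φ unitSquare) {δ : ℝ} (hδ0 : 0 < δ) (hδ1 : δ < 1 / 2) :
    volume (Icc (-(1 / 2) : ℝ) 0 ×ˢ Icc (-(1 / 2) : ℝ) 0) * volume (Icc 0 δ ×ˢ Icc 0 δ ×ˢ Icc 0 δ)
      ≤ pairing φ unitSquare (graphNbhd (fun u => -φ (-u)) unitSquare ((K + 2) * δ))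
        (Icc 0 δ ×ˢ Icc 0 δ ×ˢ Icc 0 δ) := by
  have hSQ : Icc (-(1 / 2) : ℝ) 0 ×ˢ Icc (-(1 / 2) : ℝ) 0 ⊆ unitSquare := by
    rw [unitSquare_eq]
    exact prod_mono (Icc_subset_Icc (by norm_num) (by norm_num))
      (Icc_subset_Icc (by norm_num) (by norm_num))
  refine mul_volume_le_pairing (measurableSet_Icc.prod (measurableSet_Icc.prod measurableSet_Icc))
    fun x hx => volume_le_avgOp (measurableSet_Icc.prod measurableSet_Icc) hSQ fun t ht => ?_
  have hu : (t.1 - x.1, t.2 - x.2.1) ∈ unitSquare := by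
    simp only [mem_prod, mem_Icc] at hx ht
    simp only [unitSquare_eq, mem_prod, mem_Icc]
    refine ⟨⟨?_, ?_⟩, ?_, ?_⟩ <;> linarith
  have hlip : |φ (t.1 - x.1, t.2 - x.2.1) - φ t| ≤ K * δ := by
    rw [← Real.dist_eq]
    refine (hK.dist_le_mul _ hu _ (hSQ ht)).trans (mul_le_mul_of_nonneg_left ?_ K.2)
    simp only [mem_prod, mem_Icc] at hx
    rw [Prod.dist_eq, Real.dist_eq, Real.dist_eq, max_le_iff, abs_le, abs_le]
    refine ⟨⟨?_, ?_⟩, ?_, ?_⟩ <;> linarith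
  simp only [mem_prod, mem_Icc] at hx ht
  rw [abs_le] at hlip
  refine ⟨?_, ?_⟩
  · simp only [unitSquare_eq, mem_prod, mem_Icc]
    refine ⟨⟨?_, ?_⟩, ?_, ?_⟩ <;> linarith
  · simp only [Prod.neg_mk, neg_sub, sub_neg_eq_add]
    rw [abs_lt]
    constructor <;> linarith

theorem RWT.pinv_div_three_le_qinv (h : RWT φ unitSquare pinv qinv) (hp : 0 ≤ pinv)
    (hq : qinv ≤ 1) (hφ : Measurable φ) {K : ℝ≥0} (hK : LipschitzOnWith K φ unitSquare) :
    pinv / 3 ≤ qinv := by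
  have hψ : Measurable fun u : ℝ × ℝ => -φ (-u) := (hφ.comp measurable_neg).neg
  have hsmall : ∀ᶠ δ in 𝓝[>] (0 : ℝ), δ ∈ Ioo 0 (1 / 2) := Ioo_mem_nhdsGT (by norm_num)
  have hF : ∀ δ ∈ Ioo (0 : ℝ) (1 / 2),
      volume (Icc 0 δ ×ˢ Icc 0 δ ×ˢ Icc 0 δ) = ENNReal.ofReal (1 * δ ^ (3 : ℝ)) := fun δ hδ => by
    rw [volume_Icc_prod_Icc_prod_Icc hδ.1.le hδ.1.le, Real.rpow_ofNat]
    ring_nf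
  have key : 1 * pinv + 3 * (1 - qinv) ≤ 3 := by
    refine h.le_of_scaling hp hq (a := 8 * (K + 2)) (b := 1) (c := 1 / 4)
      (E := fun δ => graphNbhd (fun u => -φ (-u)) unitSquare ((K + 2) * δ))
      (by positivity) zero_le_one (by norm_num)
      (fun _ => measurableSet_graphNbhd hψ measurableSet_unitSquare _)
      (fun _ => measurableSet_Icc.prod (measurableSet_Icc.prod measurableSet_Icc))
      (Eventually.of_forall fun δ => le_of_eq ?_) (hsmall.mono fun δ hδ => (hF δ hδ).le)
      (hsmall.mono fun δ hδ => ?_)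
    · rw [volume_graphNbhd hψ measurableSet_unitSquare, volume_unitSquare, Real.rpow_one,
        ← ENNReal.ofReal_ofNat 4, ← ENNReal.ofReal_mul' (by norm_num)]
      ring_nf
    · refine le_of_eq_of_le ?_ (le_pairing_graphNbhd_cube hK hδ.1 hδ.2)
      rw [hF δ hδ, Measure.volume_eq_prod, Measure.prod_prod, Real.volume_Icc,
        ← ENNReal.ofReal_mul (by norm_num), ← ENNReal.ofReal_mul (by norm_num)]
      norm_num
  linarith

lemma le_pairing_cube_graphNbhd {K : ℝ≥0} (hφ : Measurable φ)
    (hK : LipschitzOnWith K φ unitSquare) {δ : ℝ} (hδ0 : 0 < δ) (hδ1 : δ < 1) :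
    ENNReal.ofReal ((δ / (K + 1)) ^ 2) * volume (graphNbhd φ (Icc 0 1 ×ˢ Icc 0 1) δ)
      ≤ pairing φ unitSquare (Icc 0 δ ×ˢ Icc 0 δ ×ˢ Icc (-(2 * δ)) (2 * δ))
        (graphNbhd φ (Icc 0 1 ×ˢ Icc 0 1) δ) := by
  set r := δ / (K + 1)
  have hr0 : 0 ≤ r := by positivity
  have hrδ : r ≤ δ := div_le_self hδ0.le (by simp)
  have hKr : K * r ≤ δ :=
    calc K * r ≤ (K + 1) * r := by gcongr; linarith
      _ = δ := mul_div_cancel₀ _ (by positivity)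
  refine mul_volume_le_pairing (measurableSet_graphNbhd hφ
    (measurableSet_Icc.prod measurableSet_Icc) _) fun x ⟨hxD, hx⟩ => ?_
  -- `r` is chosen so that `φ` varies by at most `δ` on the square `S` of side `r` at `(x₁, x₂)`
  let S := Icc (x.1 - r) x.1 ×ˢ Icc (x.2.1 - r) x.2.1
  simp only [mem_prod, mem_Icc] at hxD
  have hSQ : S ⊆ unitSquare := by
    intro t ht
    simp only [S, mem_prod, mem_Icc] at ht
    simp only [unitSquare_eq, mem_prod, mem_Icc]
    refine ⟨⟨?_, ?_⟩, ?_, ?_⟩ <;> linarith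
  have hS : volume S = ENNReal.ofReal (r ^ 2) := by
    rw [Measure.volume_eq_prod, Measure.prod_prod, Real.volume_Icc, Real.volume_Icc,
      ← ENNReal.ofReal_mul (by linarith)]
    ring_nf
  refine hS ▸ volume_le_avgOp (measurableSet_Icc.prod measurableSet_Icc) hSQ fun t ht => ?_
  have hxQ : (x.1, x.2.1) ∈ unitSquare := by
    simp only [unitSquare_eq, mem_prod, mem_Icc]
    refine ⟨⟨?_, ?_⟩, ?_, ?_⟩ <;> linarith
  have hlip : |φ (x.1, x.2.1) - φ t| ≤ δ := by
    rw [← Real.dist_eq]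
    refine (hK.dist_le_mul _ hxQ _ (hSQ ht)).trans
      ((mul_le_mul_of_nonneg_left ?_ K.2).trans hKr)
    simp only [S, mem_prod, mem_Icc] at ht
    rw [Prod.dist_eq, Real.dist_eq, Real.dist_eq, max_le_iff, abs_le, abs_le]
    refine ⟨⟨?_, ?_⟩, ?_, ?_⟩ <;> linarith
  simp only [S, mem_prod, mem_Icc] at ht
  rw [abs_le] at hlip
  rw [abs_lt] at hx
  simp only [mem_prod, mem_Icc]
  refine ⟨⟨?_, ?_⟩, ⟨?_, ?_⟩, ?_, ?_⟩ <;> linarith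

theorem RWT.three_mul_pinv_sub_two_le_qinv (h : RWT φ unitSquare pinv qinv) (hp : 0 ≤ pinv)
    (hq : qinv ≤ 1) (hφ : Measurable φ) {K : ℝ≥0} (hK : LipschitzOnWith K φ unitSquare) :
    3 * pinv - 2 ≤ qinv := by
  have hsmall : ∀ᶠ δ in 𝓝[>] (0 : ℝ), δ ∈ Ioo 0 1 := Ioo_mem_nhdsGT one_pos
  have hF : ∀ δ, volume (graphNbhd φ (Icc 0 1 ×ˢ Icc 0 1) δ) = ENNReal.ofReal (2 * δ ^ (1 : ℝ)) :=
    fun δ => by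
      rw [volume_graphNbhd hφ (measurableSet_Icc.prod measurableSet_Icc), Measure.volume_eq_prod,
        Measure.prod_prod, Real.volume_Icc, Real.rpow_one]
      norm_num
  have key : 3 * pinv + 1 * (1 - qinv) ≤ 3 := by
    refine h.le_of_scaling hp hq (a := 4) (b := 2) (c := 2 / (K + 1) ^ 2)
      (by norm_num) (by norm_num) (by positivity)
      (fun _ => measurableSet_Icc.prod (measurableSet_Icc.prod measurableSet_Icc))
      (fun _ => measurableSet_graphNbhd hφ (measurableSet_Icc.prod measurableSet_Icc) _)
      (hsmall.mono fun δ hδ => ?_) (Eventually.of_forall fun δ => (hF δ).le)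
      (hsmall.mono fun δ hδ => le_of_eq_of_le ?_ (le_pairing_cube_graphNbhd hφ hK hδ.1 hδ.2))
    · rw [volume_Icc_prod_Icc_prod_Icc hδ.1.le hδ.1.le, Real.rpow_ofNat]
      exact ENNReal.ofReal_le_ofReal (le_of_eq (by ring))
    · rw [hF, ← ENNReal.ofReal_mul (by positivity), Real.rpow_ofNat, Real.rpow_one]
      congr 1
      field_simp
  linarith

theorem RWT.exponent_constraints (h : RWT φ unitSquare pinv qinv) (hp : 0 ≤ pinv)
    (hq : qinv ≤ 1) (hφ : Measurable φ) {K : ℝ≥0} (hK : LipschitzOnWith K φ unitSquare) :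
    qinv ≤ pinv ∧ pinv / 3 ≤ qinv ∧ 3 * pinv - 2 ≤ qinv := by
  obtain ⟨M, hM⟩ := isCompact_unitSquare.exists_bound_of_continuousOn hK.continuousOn
  exact ⟨h.qinv_le_pinv hp hq hM, h.pinv_div_three_le_qinv hp hq hφ hK,
    h.three_mul_pinv_sub_two_le_qinv hp hq hφ hK⟩

end ExponentConstraints

theorem contDiff_eval_pair {n : WithTop ℕ∞} (φp : MvPolynomial (Fin 2) ℝ) :
    ContDiff ℝ n (fun t : ℝ × ℝ => eval ![t.1, t.2] φp) :=
  contDiff_iff_contDiffAt.2 fun x => by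
    have := AnalyticAt.aeval_mvPolynomial (𝕜 := ℝ) (f := fun t : ℝ × ℝ => ![t.1, t.2]) (z := x)
      (fun i => by fin_cases i <;> simp [analyticAt_fst, analyticAt_snd]) φp
    simpa using this.contDiffAt

theorem stmt_9_general (φp : MvPolynomial (Fin 2) ℝ) (pinv qinv : ℝ)
    (hp0 : 0 ≤ pinv) (hq1 : qinv ≤ 1)
    (hrwt : RWT (fun t => eval ![t.1, t.2] φp) unitSquare pinv qinv) :
    qinv ≤ pinv ∧ pinv / 3 ≤ qinv ∧ 3 * pinv - 2 ≤ qinv := by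
  have hφ := contDiff_eval_pair (n := 1) φp
  obtain ⟨K, hK⟩ :=
    hφ.locallyLipschitz.locallyLipschitzOn.exists_lipschitzOnWith_of_compact isCompact_unitSquare
  exact hrwt.exponent_constraints hp0 hq1 hφ.continuous.measurable hK

/-- For any polynomial φ on ℝ², if `T = T_{[−1,1]²}` is of restricted weak type `(p,q)`
(`1 ≤ p, q ≤ ∞`), then `p ≤ q`, `q ≤ 3p` and `1/q ≥ 3/p − 2`. -/
theorem stmt_9 (φp : MvPolynomial (Fin 2) ℝ) (pinv qinv : ℝ)
    (hp0 : 0 ≤ pinv) (hp1 : pinv ≤ 1) (hq0 : 0 ≤ qinv) (hq1 : qinv ≤ 1)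
    (hrwt : RWT (fun t => eval ![t.1, t.2] φp) unitSquare pinv qinv) :
    qinv ≤ pinv ∧ pinv / 3 ≤ qinv ∧ 3 * pinv - 2 ≤ qinv :=
  stmt_9_general φp pinv qinv hp0 hq1 hrwt
end

section
/- Let φ: ℝ² → ℝ be a mixed homogeneous polynomial with exponent κ = (κ₁,κ₂) and homogeneous distance d_h = 1/(κ₁+κ₂), and let 1 ≤ p, q ≤ ∞. If the operator T = T_{[−1,1]²} is of restricted weak type (p,q), then 1/q ≥ 1/p − 1/(d_h + 1). -/
/-!
Test `T` on boxes adapted to the dilations `(x₁, x₂, x₃) ↦ (δ^κ₁ x₁, δ^κ₂ x₂, δ x₃)`. By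
homogeneity `|φ| ≤ M δ` on the rectangle `[-δ^κ₁, δ^κ₁] × [-δ^κ₂, δ^κ₂]`, so for `F` the box
with half-sides `δ^κ₁, δ^κ₂, M δ` and `E` its double, `T χ_E` is at least the area `4 δ^K` of
that rectangle on `F`, where `K = κ₁ + κ₂ = 1/d_h`. As `|E| = 8 |F|` and `|F| ≍ δ^(K+1)`, the
restricted weak type bound gives `δ^K ≲ δ^((K+1)(1/p - 1/q))`, and letting `δ → 0` forces
`(K+1)(1/p - 1/q) ≤ K`, i.e. `1/p - 1/q ≤ K/(K+1) = 1/(d_h+1)`.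
-/

open MeasureTheory MvPolynomial
open scoped ENNReal

open Filter Set Topology

lemma le_of_eventually_mul_rpow_le_s10 {A B a f : ℝ} (hA : 0 < A)
    (h : ∀ᶠ δ in 𝓝[>] 0, A * δ ^ a ≤ B * δ ^ f) : f ≤ a := by
  by_contra! haf
  have hbound : ∀ᶠ δ in 𝓝[>] (0 : ℝ), A ≤ B * δ ^ (f - a) := by
    filter_upwards [h, self_mem_nhdsWithin] with δ hδ (hδ0 : 0 < δ)
    have hδa : 0 < δ ^ a := Real.rpow_pos_of_pos hδ0 a
    rw [← mul_le_mul_iff_left₀ hδa, mul_assoc, ← Real.rpow_add hδ0, sub_add_cancel]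
    exact hδ
  have hlim : Tendsto (fun δ : ℝ => B * δ ^ (f - a)) (𝓝[>] 0) (𝓝 0) := by
    have hcont : ContinuousAt (fun δ : ℝ => B * δ ^ (f - a)) 0 :=
      (Real.continuousAt_rpow_const 0 (f - a) (Or.inr (sub_pos.2 haf).le)).const_mul B
    simpa [Real.zero_rpow (sub_pos.2 haf).ne'] using hcont.tendsto.mono_left nhdsWithin_le_nhds
  exact (ge_of_tendsto hlim hbound).not_gt hA

def centeredRect (a b : ℝ) : Set (ℝ × ℝ) := Icc (-a) a ×ˢ Icc (-b) b

def centeredBox (a b c : ℝ) : Set (ℝ × ℝ × ℝ) := Icc (-a) a ×ˢ Icc (-b) b ×ˢ Icc (-c) c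

lemma unitSquare_eq_centeredRect : unitSquare = centeredRect 1 1 :=
  (Icc_prod_Icc _ _ _ _).symm

lemma centeredRect_mono {a b a' b' : ℝ} (ha : a ≤ a') (hb : b ≤ b') :
    centeredRect a b ⊆ centeredRect a' b' :=
  prod_mono (Icc_subset_Icc (neg_le_neg ha) ha) (Icc_subset_Icc (neg_le_neg hb) hb)

lemma measurableSet_centeredRect (a b : ℝ) : MeasurableSet (centeredRect a b) :=
  measurableSet_Icc.prod measurableSet_Icc

lemma measurableSet_centeredBox (a b c : ℝ) : MeasurableSet (centeredBox a b c) :=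
  measurableSet_Icc.prod (measurableSet_Icc.prod measurableSet_Icc)

lemma volume_centeredRect {a : ℝ} (b : ℝ) (ha : 0 ≤ a) :
    volume (centeredRect a b) = ENNReal.ofReal (4 * (a * b)) := by
  rw [centeredRect, Measure.volume_eq_prod, Measure.prod_prod, Real.volume_Icc, Real.volume_Icc,
    ← ENNReal.ofReal_mul (by linarith)]
  ring_nf

lemma volume_centeredBox {a b : ℝ} (c : ℝ) (ha : 0 ≤ a) (hb : 0 ≤ b) :
    volume (centeredBox a b c) = ENNReal.ofReal (8 * (a * b * c)) := by
  rw [centeredBox, Measure.volume_eq_prod, Measure.prod_prod, Measure.volume_eq_prod,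
    Measure.prod_prod, Real.volume_Icc, Real.volume_Icc, Real.volume_Icc,
    ← ENNReal.ofReal_mul (by linarith), ← ENNReal.ofReal_mul (by linarith)]
  ring_nf

lemma abs_le_of_mem_centeredRect {φ : ℝ × ℝ → ℝ} {κ₁ κ₂ M δ : ℝ}
    (hhom : ∀ σ > (0 : ℝ), ∀ z₁ z₂ : ℝ, φ (σ ^ κ₁ * z₁, σ ^ κ₂ * z₂) = σ * φ (z₁, z₂))
    (hM : ∀ t ∈ centeredRect 1 1, |φ t| ≤ M) (hδ : 0 < δ) {t : ℝ × ℝ}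
    (ht : t ∈ centeredRect (δ ^ κ₁) (δ ^ κ₂)) : |φ t| ≤ M * δ := by
  have ha : 0 < δ ^ κ₁ := Real.rpow_pos_of_pos hδ κ₁
  have hb : 0 < δ ^ κ₂ := Real.rpow_pos_of_pos hδ κ₂
  simp only [centeredRect, mem_prod, mem_Icc, ← abs_le] at ht hM
  have hs : |t.1 / δ ^ κ₁| ≤ 1 ∧ |t.2 / δ ^ κ₂| ≤ 1 := by
    rw [abs_div, abs_div, abs_of_pos ha, abs_of_pos hb, div_le_one ha, div_le_one hb]
    exact ht
  have hφt : φ t = δ * φ (t.1 / δ ^ κ₁, t.2 / δ ^ κ₂) := by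
    rw [← hhom δ hδ, mul_div_cancel₀ _ ha.ne', mul_div_cancel₀ _ hb.ne']
  rw [hφt, abs_mul, abs_of_pos hδ, mul_comm M]
  exact mul_le_mul_of_nonneg_left (hM _ hs) hδ.le

lemma volume_mul_volume_le_pairing {φ : ℝ × ℝ → ℝ} {R S : Set (ℝ × ℝ)}
    {E F : Set (ℝ × ℝ × ℝ)} (hSR : S ⊆ R) (hS : MeasurableSet S) (hF : MeasurableSet F)
    (hmem : ∀ x ∈ F, ∀ t ∈ S, (x.1 - t.1, x.2.1 - t.2, x.2.2 - φ t) ∈ E) :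
    volume S * volume F ≤ pairing φ R E F := by
  have havg : ∀ x ∈ F, volume S ≤ avgOp φ R (E.indicator 1) x := fun x hx =>
    calc volume S = ∫⁻ _ in S, 1 := (setLIntegral_one S).symm
      _ ≤ ∫⁻ t in S, E.indicator 1 (x.1 - t.1, x.2.1 - t.2, x.2.2 - φ t) :=
        setLIntegral_mono' hS fun t ht => by simp [indicator_of_mem (hmem x hx t ht)]
      _ ≤ avgOp φ R (E.indicator 1) x := lintegral_mono_set hSR
  calc volume S * volume F = ∫⁻ x, volume S * F.indicator 1 x := by
        rw [lintegral_const_mul _ (measurable_one.indicator hF), lintegral_indicator_one hF]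
    _ ≤ pairing φ R E F := lintegral_mono fun x => by
        by_cases hx : x ∈ F
        · simpa [hx] using havg x hx
        · simp [hx]

lemma volume_mul_volume_le_pairing_centeredBox {φ : ℝ × ℝ → ℝ} {R : Set (ℝ × ℝ)} {a b c : ℝ}
    (hR : centeredRect a b ⊆ R) (hφ : ∀ t ∈ centeredRect a b, |φ t| ≤ c) :
    volume (centeredRect a b) * volume (centeredBox a b c) ≤
      pairing φ R (centeredBox (2 * a) (2 * b) (2 * c)) (centeredBox a b c) := by
  refine volume_mul_volume_le_pairing hR (measurableSet_centeredRect a b)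
    (measurableSet_centeredBox a b c) fun x hx t ht => ?_
  have hφt := abs_le.1 (hφ t ht)
  simp only [centeredBox, centeredRect, mem_prod, mem_Icc] at hx ht ⊢
  refine ⟨⟨?_, ?_⟩, ⟨?_, ?_⟩, ?_, ?_⟩ <;> linarith

lemma RWT.exists_ofReal_bound {φ : ℝ × ℝ → ℝ} {R : Set (ℝ × ℝ)} {pinv qinv : ℝ}
    (h : RWT φ R pinv qinv) :
    ∃ C : ℝ, 0 ≤ C ∧ ∀ (E F : Set (ℝ × ℝ × ℝ)) (e f : ℝ), MeasurableSet E → MeasurableSet F →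
      0 < e → 0 < f → volume E = ENNReal.ofReal e → volume F = ENNReal.ofReal f →
      pairing φ R E F ≤ ENNReal.ofReal (C * e ^ pinv * f ^ (1 - qinv)) := by
  obtain ⟨C, hC0, hC⟩ := h
  refine ⟨C, hC0, fun E F e f hE hF he hf hvE hvF => ?_⟩
  have := hC E F hE hF (by simp [hvE]) (by simp [hvF])
  rwa [hvE, hvF, ENNReal.ofReal_rpow_of_pos he, ENNReal.ofReal_rpow_of_pos hf,
    ← ENNReal.ofReal_mul hC0, ← ENNReal.ofReal_mul (by positivity)] at this

lemma RWT.exists_rpow_bound_of_mixedHomogeneous {φ : ℝ × ℝ → ℝ} {κ₁ κ₂ pinv qinv : ℝ}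
    (hκ₁ : 0 ≤ κ₁) (hκ₂ : 0 ≤ κ₂)
    (hhom : ∀ σ > (0 : ℝ), ∀ z₁ z₂ : ℝ, φ (σ ^ κ₁ * z₁, σ ^ κ₂ * z₂) = σ * φ (z₁, z₂))
    {M : ℝ} (hM0 : 0 < M) (hM : ∀ t ∈ centeredRect 1 1, |φ t| ≤ M)
    (h : RWT φ unitSquare pinv qinv) :
    ∃ B : ℝ, ∀ δ ∈ Ioc (0 : ℝ) 1,
      4 * δ ^ (κ₁ + κ₂) ≤ B * δ ^ ((κ₁ + κ₂ + 1) * (pinv - qinv)) := by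
  obtain ⟨C, hC0, hC⟩ := h.exists_ofReal_bound
  refine ⟨C * 8 ^ pinv * (8 * M) ^ (pinv - qinv), fun δ ⟨hδ0, hδ1⟩ => ?_⟩
  set a := δ ^ κ₁
  set b := δ ^ κ₂
  have ha : 0 < a := Real.rpow_pos_of_pos hδ0 κ₁
  have hb : 0 < b := Real.rpow_pos_of_pos hδ0 κ₂
  have hab : a * b = δ ^ (κ₁ + κ₂) := (Real.rpow_add hδ0 κ₁ κ₂).symm
  have hR : centeredRect a b ⊆ unitSquare := unitSquare_eq_centeredRect ▸
    centeredRect_mono (Real.rpow_le_one hδ0.le hδ1 hκ₁) (Real.rpow_le_one hδ0.le hδ1 hκ₂)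
  have hlow := volume_mul_volume_le_pairing_centeredBox hR
    fun t ht => abs_le_of_mem_centeredRect hhom hM hδ0 ht
  set V := 8 * (a * b * (M * δ))
  have hV0 : 0 < V := by positivity
  have hvolE : volume (centeredBox (2 * a) (2 * b) (2 * (M * δ))) = ENNReal.ofReal (8 * V) := by
    rw [volume_centeredBox _ (by positivity) (by positivity)]
    congr 1
    simp only [V]
    ring
  have hup := hC _ _ (8 * V) V (measurableSet_centeredBox _ _ _) (measurableSet_centeredBox _ _ _)
    (by positivity) hV0 hvolE (volume_centeredBox _ ha.le hb.le)
  rw [volume_centeredRect _ ha.le, volume_centeredBox _ ha.le hb.le,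
    ← ENNReal.ofReal_mul (by positivity)] at hlow
  have hreal : 4 * (a * b) * V ≤ C * (8 * V) ^ pinv * V ^ (1 - qinv) :=
    (ENNReal.ofReal_le_ofReal_iff (by positivity)).1 (hlow.trans hup)
  have hsplit : C * (8 * V) ^ pinv * V ^ (1 - qinv) = C * 8 ^ pinv * V ^ (pinv - qinv) * V :=
    calc C * (8 * V) ^ pinv * V ^ (1 - qinv) = C * 8 ^ pinv * (V ^ pinv * V ^ (1 - qinv)) := by
          rw [Real.mul_rpow (by norm_num) hV0.le]; ring
      _ = C * 8 ^ pinv * V ^ (pinv - qinv) * V := by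
          rw [← Real.rpow_add hV0, show pinv + (1 - qinv) = pinv - qinv + 1 by ring,
            Real.rpow_add_one hV0.ne']
          ring
  have hVpow :
      V ^ (pinv - qinv) = (8 * M) ^ (pinv - qinv) * δ ^ ((κ₁ + κ₂ + 1) * (pinv - qinv)) := by
    rw [show V = 8 * M * δ ^ (κ₁ + κ₂ + 1) by rw [Real.rpow_add_one hδ0.ne', ← hab]; ring,
      Real.mul_rpow (by positivity) (by positivity), ← Real.rpow_mul hδ0.le]
  have hcancel := le_of_mul_le_mul_right (hreal.trans_eq hsplit) hV0
  rw [hab, hVpow] at hcancel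
  linarith

lemma RWT.mul_sub_le_of_mixedHomogeneous {φ : ℝ × ℝ → ℝ} {κ₁ κ₂ pinv qinv : ℝ}
    (hκ₁ : 0 ≤ κ₁) (hκ₂ : 0 ≤ κ₂) (hφ : Continuous φ)
    (hhom : ∀ σ > (0 : ℝ), ∀ z₁ z₂ : ℝ, φ (σ ^ κ₁ * z₁, σ ^ κ₂ * z₂) = σ * φ (z₁, z₂))
    (h : RWT φ unitSquare pinv qinv) :
    (κ₁ + κ₂ + 1) * (pinv - qinv) ≤ κ₁ + κ₂ := by
  obtain ⟨M₀, hM₀⟩ := (isCompact_Icc : IsCompact unitSquare).exists_bound_of_continuousOn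
    hφ.continuousOn
  have hM : ∀ t ∈ centeredRect 1 1, |φ t| ≤ max M₀ 1 := by
    rw [← unitSquare_eq_centeredRect]
    exact fun t ht => (hM₀ t ht).trans (le_max_left _ _)
  obtain ⟨B, hB⟩ := h.exists_rpow_bound_of_mixedHomogeneous hκ₁ hκ₂ hhom
    (zero_lt_one.trans_le (le_max_right _ _)) hM
  exact le_of_eventually_mul_rpow_le_s10 four_pos
    (by filter_upwards [Ioc_mem_nhdsGT one_pos] using hB)

theorem stmt_10_general (φp : MvPolynomial (Fin 2) ℝ) (κ₁ κ₂ : ℝ) (hκ₁ : 0 < κ₁) (hκ₂ : 0 < κ₂)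
    (hmh : ∀ σ > (0 : ℝ), ∀ z₁ z₂ : ℝ,
      eval ![σ ^ κ₁ * z₁, σ ^ κ₂ * z₂] φp = σ * eval ![z₁, z₂] φp)
    (pinv qinv : ℝ)
    (hrwt : RWT (fun t => eval ![t.1, t.2] φp) unitSquare pinv qinv) :
    pinv - 1 / (1 / (κ₁ + κ₂) + 1) ≤ qinv := by
  have hK : 0 < κ₁ + κ₂ := add_pos hκ₁ hκ₂
  have hφ : Continuous fun t : ℝ × ℝ => eval ![t.1, t.2] φp :=
    (continuous_eval φp).comp (by fun_prop)
  have hexp := hrwt.mul_sub_le_of_mixedHomogeneous hκ₁.le hκ₂.le hφ hmh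
  have hdiv : pinv - qinv ≤ (κ₁ + κ₂) / (κ₁ + κ₂ + 1) := by
    rw [le_div_iff₀ (by positivity)]
    linarith
  rw [show 1 / (1 / (κ₁ + κ₂) + 1) = (κ₁ + κ₂) / (κ₁ + κ₂ + 1) by field_simp; ring]
  linarith

/-- For a mixed homogeneous polynomial φ with exponent κ = (κ₁,κ₂) and homogeneous
distance d_h = 1/(κ₁+κ₂): if `T = T_{[−1,1]²}` is of restricted weak type `(p,q)`,
then `1/q ≥ 1/p − 1/(d_h+1)`. -/
theorem stmt_10 (φp : MvPolynomial (Fin 2) ℝ) (κ₁ κ₂ : ℝ) (hκ₁ : 0 < κ₁) (hκ₂ : 0 < κ₂)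
    (hmh : ∀ σ > (0 : ℝ), ∀ z₁ z₂ : ℝ,
      eval ![σ ^ κ₁ * z₁, σ ^ κ₂ * z₂] φp = σ * eval ![z₁, z₂] φp)
    (pinv qinv : ℝ) (hp0 : 0 ≤ pinv) (hp1 : pinv ≤ 1) (hq0 : 0 ≤ qinv) (hq1 : qinv ≤ 1)
    (hrwt : RWT (fun t => eval ![t.1, t.2] φp) unitSquare pinv qinv) :
    pinv - 1 / (1 / (κ₁ + κ₂) + 1) ≤ qinv :=
  stmt_10_general φp κ₁ κ₂ hκ₁ hκ₂ hmh pinv qinv hrwt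
end

section
/- Let φ ∈ ℝ[z₁,z₂], let λ ∈ ℝ, r ≥ 1, N ≥ 1, and suppose (z₂ − λz₁^r)^N divides φ. If the operator T = T_{[−1,1]²} is of restricted weak type (p,q) for some 1 ≤ p, q ≤ ∞, then 1/q ≥ 1/p − 1/N. -/
open MeasureTheory MvPolynomial
open scoped ENNReal

/-- If `(z₂ − λz₁^r)^N` divides φ (λ ∈ ℝ, r ≥ 1, N ≥ 1) and `T = T_{[−1,1]²}` is of
restricted weak type `(p,q)`, then `1/q ≥ 1/p − 1/N`. -/
theorem stmt_12 (φp : MvPolynomial (Fin 2) ℝ) (lam : ℝ) (r N : ℕ) (hr : 1 ≤ r) (hN : 1 ≤ N)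
    (hdvd : (X 1 - C lam * X 0 ^ r : MvPolynomial (Fin 2) ℝ) ^ N ∣ φp)
    (pinv qinv : ℝ) (hp0 : 0 ≤ pinv) (hp1 : pinv ≤ 1) (hq0 : 0 ≤ qinv) (hq1 : qinv ≤ 1)
    (hrwt : RWT (fun t => eval ![t.1, t.2] φp) unitSquare pinv qinv) :
    pinv - 1 / (N : ℝ) ≤ qinv := by
  classical
  obtain ⟨ψ, hψ⟩ := hdvd
  obtain ⟨Cb, hCb0, hCb⟩ := hrwt
  -- a bound for ψ on the unit square
  have hcont : Continuous (fun t : ℝ × ℝ => eval ![t.1, t.2] ψ) := by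
    have h1 : Continuous (fun t : ℝ × ℝ => (![t.1, t.2] : Fin 2 → ℝ)) := by
      refine continuous_pi fun i => ?_
      fin_cases i
      · simpa using continuous_fst
      · simpa using continuous_snd
    have h2 : (fun t : ℝ × ℝ => eval ![t.1, t.2] ψ)
        = (fun v : Fin 2 → ℝ => eval v ψ) ∘ (fun t : ℝ × ℝ => ![t.1, t.2]) := rfl
    rw [h2]
    exact Continuous.comp (MvPolynomial.continuous_eval ψ) h1
  obtain ⟨M0, hM0⟩ :=
    (isCompact_Icc (a := ((-1, -1) : ℝ × ℝ)) (b := (1, 1))).exists_bound_of_continuousOn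
      hcont.continuousOn
  obtain ⟨M, hM⟩ : ∃ M : ℝ, M = max M0 0 := ⟨_, rfl⟩
  have hM0' : 0 ≤ M := by rw [hM]; exact le_max_right _ _
  have hMb : ∀ t : ℝ × ℝ, t ∈ Set.Icc ((-1, -1) : ℝ × ℝ) (1, 1) →
      |eval ![t.1, t.2] ψ| ≤ M := by
    intro t ht
    rw [hM]
    exact le_trans (hM0 t ht) (le_max_left _ _)
  -- the small parameter a
  obtain ⟨a, ha_def⟩ : ∃ a : ℝ, a = 1 / (2 * (1 + |lam|)) := ⟨_, rfl⟩
  have habs : (0:ℝ) ≤ |lam| := abs_nonneg lam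
  have ha0 : 0 < a := by rw [ha_def]; positivity
  have ha2 : a ≤ 1 / 2 := by
    rw [ha_def, div_le_div_iff₀ (by positivity) (by norm_num)]
    nlinarith
  have hla : |lam| * a ≤ 1 / 2 := by
    rw [ha_def, mul_one_div, div_le_div_iff₀ (by positivity) (by norm_num)]
    nlinarith
  -- evaluation of φp
  have Φeval : ∀ t1 t2 : ℝ, eval ![t1, t2] φp
      = (t2 - lam * t1 ^ r) ^ N * eval ![t1, t2] ψ := by
    intro t1 t2
    rw [hψ]
    simp [eval_mul, eval_pow, eval_sub, eval_X, eval_C, Matrix.cons_val_one, Matrix.head_cons,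
      Matrix.cons_val_zero]
  have hN0 : (0:ℝ) < (N : ℝ) := by exact_mod_cast hN
  -- the key inequality for every small σ
  have key : ∀ σ : ℝ, 0 < σ → σ ≤ 1 / 2 →
      σ * a * (a * σ ^ N) ≤
        Cb * ((6 * (2 * M + 1) * σ ^ N) ^ pinv * (a * σ ^ N) ^ (1 - qinv)) := by
    intro σ hσ0 hσ2
    have hσN : 0 < σ ^ N := pow_pos hσ0 N
    set E : Set (ℝ × ℝ × ℝ) :=
      (Set.Icc (-1 : ℝ) 1) ×ˢ ((Set.Icc (-1 : ℝ) 2) ×ˢ (Set.Icc (-(M * σ ^ N)) ((M + 1) * σ ^ N)))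
      with hE_def
    set F : Set (ℝ × ℝ × ℝ) :=
      (Set.Icc (0 : ℝ) a) ×ˢ ((Set.Icc (0 : ℝ) 1) ×ˢ (Set.Icc (0 : ℝ) (σ ^ N))) with hF_def
    set S : Set (ℝ × ℝ) :=
      regionBetween (fun u => lam * u ^ r) (fun u => lam * u ^ r + σ) (Set.Ioc 0 a) with hS_def
    have hfm : Measurable (fun u : ℝ => lam * u ^ r) := by fun_prop
    have hgm : Measurable (fun u : ℝ => lam * u ^ r + σ) := by fun_prop
    have hEm : MeasurableSet E :=
      measurableSet_Icc.prod (measurableSet_Icc.prod measurableSet_Icc)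
    have hFm : MeasurableSet F :=
      measurableSet_Icc.prod (measurableSet_Icc.prod measurableSet_Icc)
    have hSm : MeasurableSet S := measurableSet_regionBetween hfm hgm measurableSet_Ioc
    -- bounds on points of S
    have hSpt : ∀ t : ℝ × ℝ, t ∈ S → 0 < t.1 ∧ t.1 ≤ a ∧ |t.2| ≤ 1 ∧
        0 < t.2 - lam * t.1 ^ r ∧ t.2 - lam * t.1 ^ r < σ := by
      intro t ht
      rw [hS_def] at ht
      obtain ⟨ht1, ht2⟩ := ht
      obtain ⟨ht1a, ht1b⟩ := ht1
      obtain ⟨ht2a', ht2b'⟩ := ht2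
      have ht2a : lam * t.1 ^ r < t.2 := ht2a'
      have ht2b : t.2 < lam * t.1 ^ r + σ := ht2b'
      have ht1r : t.1 ^ r ≤ t.1 := by
        calc t.1 ^ r ≤ t.1 ^ 1 := by
              apply pow_le_pow_of_le_one ht1a.le (le_trans ht1b (by linarith)) hr
          _ = t.1 := pow_one _
      have hpr0 : 0 ≤ t.1 ^ r := pow_nonneg ht1a.le r
      have hcb : |lam * t.1 ^ r| ≤ 1 / 2 := by
        rw [abs_mul]
        calc |lam| * |t.1 ^ r| ≤ |lam| * a := by
              apply mul_le_mul_of_nonneg_left _ habs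
              rw [abs_of_nonneg hpr0]
              exact le_trans ht1r ht1b
          _ ≤ 1 / 2 := hla
      obtain ⟨hcb1, hcb2⟩ := abs_le.mp hcb
      refine ⟨ht1a, ht1b, ?_, by linarith, by linarith⟩
      rw [abs_le]
      constructor <;> linarith
    have hSsub : S ⊆ unitSquare := by
      intro t ht
      obtain ⟨h1, h2, h3, _, _⟩ := hSpt t ht
      obtain ⟨h3a, h3b⟩ := abs_le.mp h3
      simp only [unitSquare, Set.mem_Icc, Prod.le_def]
      exact ⟨⟨by linarith, h3a⟩, ⟨by linarith, h3b⟩⟩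
    -- |φ| ≤ M σ^N on S
    have hφb : ∀ t : ℝ × ℝ, t ∈ S → |eval ![t.1, t.2] φp| ≤ M * σ ^ N := by
      intro t ht
      obtain ⟨h1, h2, h3, h4, h5⟩ := hSpt t ht
      obtain ⟨h3a, h3b⟩ := abs_le.mp h3
      rw [Φeval t.1 t.2, abs_mul, abs_pow]
      have hsb : |t.2 - lam * t.1 ^ r| ^ N ≤ σ ^ N := by
        apply pow_le_pow_left₀ (abs_nonneg _)
        rw [abs_of_pos h4]; exact h5.le
      have hψb : |eval ![t.1, t.2] ψ| ≤ M := by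
        apply hMb
        simp only [Set.mem_Icc, Prod.le_def]
        exact ⟨⟨by linarith, h3a⟩, ⟨by linarith, h3b⟩⟩
      calc |t.2 - lam * t.1 ^ r| ^ N * |eval ![t.1, t.2] ψ|
          ≤ σ ^ N * M := mul_le_mul hsb hψb (abs_nonneg _) hσN.le
        _ = M * σ ^ N := mul_comm _ _
    -- the translate condition
    have hmem : ∀ x : ℝ × ℝ × ℝ, x ∈ F → ∀ t : ℝ × ℝ, t ∈ S →
        (x.1 - t.1, x.2.1 - t.2, x.2.2 - eval ![t.1, t.2] φp) ∈ E := by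
      intro x hx t ht
      obtain ⟨h1, h2, h3, _, _⟩ := hSpt t ht
      obtain ⟨h3a, h3b⟩ := abs_le.mp h3
      obtain ⟨hφ1, hφ2⟩ := abs_le.mp (hφb t ht)
      rw [hF_def] at hx
      obtain ⟨hx1, hx2, hx3⟩ := hx
      simp only [Set.mem_Icc] at hx1 hx2 hx3
      have hsplit : (M + 1) * σ ^ N = M * σ ^ N + σ ^ N := by ring
      refine ⟨?_, ?_, ?_⟩
      · simp only [Set.mem_Icc]
        constructor <;> linarith [hx1.1, hx1.2]
      · simp only [Set.mem_Icc]
        constructor <;> linarith [hx2.1, hx2.2]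
      · simp only [Set.mem_Icc]
        constructor <;> linarith [hx3.1, hx3.2]
    -- volumes
    have hvolE : volume E = ENNReal.ofReal (6 * (2 * M + 1) * σ ^ N) := by
      rw [hE_def, Measure.volume_eq_prod, Measure.prod_prod, Measure.volume_eq_prod,
        Measure.prod_prod, Real.volume_Icc, Real.volume_Icc, Real.volume_Icc,
        ← ENNReal.ofReal_mul (show (0:ℝ) ≤ 2 - -1 by norm_num),
        ← ENNReal.ofReal_mul (show (0:ℝ) ≤ 1 - -1 by norm_num)]
      congr 1
      ring
    have hvolF : volume F = ENNReal.ofReal (a * σ ^ N) := by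
      rw [hF_def, Measure.volume_eq_prod, Measure.prod_prod, Measure.volume_eq_prod,
        Measure.prod_prod, Real.volume_Icc, Real.volume_Icc, Real.volume_Icc,
        ← ENNReal.ofReal_mul (show (0:ℝ) ≤ 1 - 0 by norm_num),
        ← ENNReal.ofReal_mul (show (0:ℝ) ≤ a - 0 by simpa using ha0.le)]
      congr 1
      ring
    have hvolS : volume S = ENNReal.ofReal σ * ENNReal.ofReal a := by
      rw [hS_def, Measure.volume_eq_prod, volume_regionBetween_eq_lintegral' hfm hgm
        measurableSet_Ioc]
      simp only [Pi.sub_apply, add_sub_cancel_left]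
      rw [setLIntegral_const, Real.volume_Ioc, sub_zero]
    -- lower bound on the pairing
    have hlow : ENNReal.ofReal σ * ENNReal.ofReal a * volume F ≤
        pairing (fun t => eval ![t.1, t.2] φp) unitSquare E F := by
      have hpt : ∀ x : ℝ × ℝ × ℝ, x ∈ F →
          volume S ≤ avgOp (fun t => eval ![t.1, t.2] φp) unitSquare (E.indicator 1) x := by
        intro x hx
        have step1 : volume S = ∫⁻ _ in S, (1 : ℝ≥0∞) := (setLIntegral_one S).symm
        rw [step1, avgOp]
        calc (∫⁻ _ in S, (1 : ℝ≥0∞))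
            ≤ ∫⁻ t in S, E.indicator 1 (x.1 - t.1, x.2.1 - t.2,
                x.2.2 - eval ![t.1, t.2] φp) := by
              apply lintegral_mono_ae
              filter_upwards [ae_restrict_of_forall_mem hSm (hmem x hx)] with t ht
              rw [Set.indicator_of_mem ht]
              simp
          _ ≤ ∫⁻ t in unitSquare, E.indicator 1 (x.1 - t.1, x.2.1 - t.2,
                x.2.2 - eval ![t.1, t.2] φp) := lintegral_mono_set hSsub
      have hrw : pairing (fun t => eval ![t.1, t.2] φp) unitSquare E F
          = ∫⁻ x in F, avgOp (fun t => eval ![t.1, t.2] φp) unitSquare (E.indicator 1) x := by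
        rw [pairing, ← lintegral_indicator hFm]
        apply lintegral_congr
        intro x
        by_cases hx : x ∈ F
        · rw [Set.indicator_of_mem hx, Set.indicator_of_mem hx, Pi.one_apply, mul_one]
        · rw [Set.indicator_of_notMem hx, Set.indicator_of_notMem hx, mul_zero]
      rw [hrw, ← hvolS]
      calc volume S * volume F = ∫⁻ _ in F, volume S := (setLIntegral_const F _).symm
        _ ≤ ∫⁻ x in F, avgOp (fun t => eval ![t.1, t.2] φp) unitSquare (E.indicator 1) x := by
            apply lintegral_mono_ae
            exact ae_restrict_of_forall_mem hFm hpt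
    -- apply the RWT hypothesis
    have happ := hCb E F hEm hFm (by rw [hvolE]; exact ENNReal.ofReal_lt_top)
      (by rw [hvolF]; exact ENNReal.ofReal_lt_top)
    have hEpos : (0:ℝ) < 6 * (2 * M + 1) * σ ^ N := by
      nlinarith [mul_pos (show (0:ℝ) < 2 * M + 1 by linarith) hσN]
    have hFpos : (0:ℝ) < a * σ ^ N := mul_pos ha0 hσN
    have hchain : ENNReal.ofReal (σ * a * (a * σ ^ N)) ≤
        ENNReal.ofReal (Cb * ((6 * (2 * M + 1) * σ ^ N) ^ pinv * (a * σ ^ N) ^ (1 - qinv))) := by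
      calc ENNReal.ofReal (σ * a * (a * σ ^ N))
          = ENNReal.ofReal σ * ENNReal.ofReal a * volume F := by
            rw [hvolF, ENNReal.ofReal_mul (by positivity), ENNReal.ofReal_mul hσ0.le]
        _ ≤ pairing (fun t => eval ![t.1, t.2] φp) unitSquare E F := hlow
        _ ≤ ENNReal.ofReal Cb * volume E ^ pinv * volume F ^ (1 - qinv) := happ
        _ = ENNReal.ofReal (Cb * ((6 * (2 * M + 1) * σ ^ N) ^ pinv
              * (a * σ ^ N) ^ (1 - qinv))) := by
            rw [hvolE, hvolF, ENNReal.ofReal_rpow_of_pos hEpos, ENNReal.ofReal_rpow_of_pos hFpos,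
              mul_assoc, ← ENNReal.ofReal_mul (Real.rpow_nonneg hEpos.le _),
              ← ENNReal.ofReal_mul hCb0]
    exact (ENNReal.ofReal_le_ofReal_iff
      (mul_nonneg hCb0 (mul_nonneg (Real.rpow_nonneg hEpos.le _)
        (Real.rpow_nonneg hFpos.le _)))).mp hchain
  -- now deduce the exponent inequality
  by_contra hcon
  push_neg at hcon
  obtain ⟨ε, hε_def⟩ : ∃ ε : ℝ, ε = (N : ℝ) * (pinv - qinv) - 1 := ⟨_, rfl⟩
  have hε0 : 0 < ε := by
    have h1 : 1 / (N : ℝ) < pinv - qinv := by linarith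
    have h2 : 1 < (pinv - qinv) * (N : ℝ) := (div_lt_iff₀ hN0).mp h1
    rw [hε_def]; nlinarith
  obtain ⟨K1, hK1⟩ : ∃ K1 : ℝ, K1 = 6 * (2 * M + 1) := ⟨_, rfl⟩
  have hK1pos : 0 < K1 := by rw [hK1]; linarith
  have key' : ∀ σ : ℝ, 0 < σ → σ ≤ 1 / 2 →
      σ * a * (a * σ ^ N) ≤ Cb * ((K1 * σ ^ N) ^ pinv * (a * σ ^ N) ^ (1 - qinv)) := by
    intro σ h1 h2
    rw [hK1]
    exact key σ h1 h2
  obtain ⟨D, hD_def⟩ : ∃ D : ℝ, D = Cb * (K1 ^ pinv * a ^ (1 - qinv)) := ⟨_, rfl⟩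
  have key2 : ∀ σ : ℝ, 0 < σ → σ ≤ 1 / 2 → a ^ 2 ≤ D * σ ^ ε := by
    intro σ hσ0 hσ2
    have h := key' σ hσ0 hσ2
    have e1 : (K1 * σ ^ N) ^ pinv = K1 ^ pinv * σ ^ ((N : ℝ) * pinv) := by
      rw [Real.mul_rpow hK1pos.le (by positivity)]
      congr 1
      rw [← Real.rpow_natCast σ N, ← Real.rpow_mul hσ0.le]
    have e2 : (a * σ ^ N) ^ (1 - qinv) = a ^ (1 - qinv) * σ ^ ((N : ℝ) * (1 - qinv)) := by
      rw [Real.mul_rpow ha0.le (by positivity)]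
      congr 1
      rw [← Real.rpow_natCast σ N, ← Real.rpow_mul hσ0.le]
    have e0 : σ * a * (a * σ ^ N) = a ^ 2 * σ ^ ((N : ℝ) + 1) := by
      rw [show ((N : ℝ) + 1) = ((N + 1 : ℕ) : ℝ) by push_cast; ring, Real.rpow_natCast]
      ring
    rw [e0, e1, e2] at h
    have e3 : Cb * (K1 ^ pinv * σ ^ ((N : ℝ) * pinv) * (a ^ (1 - qinv)
        * σ ^ ((N : ℝ) * (1 - qinv)))) = D * σ ^ (ε + ((N : ℝ) + 1)) := by
      rw [hD_def]
      have : ε + ((N : ℝ) + 1) = (N : ℝ) * pinv + (N : ℝ) * (1 - qinv) := by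
        rw [hε_def]; ring
      rw [this, Real.rpow_add hσ0]
      ring
    rw [e3, Real.rpow_add hσ0 ε ((N : ℝ) + 1), ← mul_assoc] at h
    exact le_of_mul_le_mul_right h (Real.rpow_pos_of_pos hσ0 _)
  have hD0 : 0 < D := by
    by_contra hD
    push_neg at hD
    have h := key2 (1 / 2) one_half_pos le_rfl
    have hx : (0:ℝ) < (1 / 2 : ℝ) ^ ε := Real.rpow_pos_of_pos (by norm_num) ε
    have h2 := mul_le_mul_of_nonneg_right hD hx.le
    have ha2pos : 0 < a ^ 2 := pow_pos ha0 2
    linarith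
  have ha2pos : 0 < a ^ 2 := pow_pos ha0 2
  have hquot : 0 < a ^ 2 / (2 * D) := div_pos ha2pos (by linarith)
  obtain ⟨σ0, hσ0_def⟩ : ∃ σ0 : ℝ, σ0 = min (1 / 2) ((a ^ 2 / (2 * D)) ^ ε⁻¹) := ⟨_, rfl⟩
  have hσ00 : 0 < σ0 := by
    rw [hσ0_def]
    exact lt_min one_half_pos (Real.rpow_pos_of_pos hquot _)
  have h := key2 σ0 hσ00 (by rw [hσ0_def]; exact min_le_left _ _)
  have hle : σ0 ^ ε ≤ a ^ 2 / (2 * D) := by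
    calc σ0 ^ ε ≤ ((a ^ 2 / (2 * D)) ^ ε⁻¹) ^ ε := by
          apply Real.rpow_le_rpow hσ00.le _ hε0.le
          rw [hσ0_def]
          exact min_le_right _ _
      _ = a ^ 2 / (2 * D) := Real.rpow_inv_rpow hquot.le hε0.ne'
  have hfin : D * σ0 ^ ε ≤ a ^ 2 / 2 := by
    calc D * σ0 ^ ε ≤ D * (a ^ 2 / (2 * D)) := mul_le_mul_of_nonneg_left hle hD0.le
      _ = a ^ 2 / 2 := by field_simp
  linarith
end
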